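/- arXiv:2309.16872 — 7 statements merged into one kernel-verified Lean document; each statement's English description precedes it below -/
import Mathlib

section
/- Let P be a polytope in ℝⁿ and u ∈ ℝⁿ \ {0}. Then the touching cone of P in direction u equals the normal cone of P at the support set F(P,u), i.e. T(P,u) = N(P, F(P,u)), and the touching space satisfies TS(P,u) = span(F(P,u) - F(P,u)) (the linear subspace parallel to the affine hull of the support set). -/
open Set MeasureTheory Metric
open scoped Pointwise

noncomputable section

abbrev Euc (n : ℕ) := EuclideanSpace ℝ (Fin n)

/-- Support function of a set. -/
def suppFn {n : ℕ} (K : Set (Euc n)) (u : Euc n) : ℝ :=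
  sSup ((fun x => (inner ℝ x u : ℝ)) '' K)

/-- Support set `F(K, u)`. -/
def suppSet {n : ℕ} (K : Set (Euc n)) (u : Euc n) : Set (Euc n) :=
  {x ∈ K | (inner ℝ x u : ℝ) = suppFn K u}

/-- `F` is a face of the convex set `A`. -/
def IsFaceOf {n : ℕ} (F A : Set (Euc n)) : Prop :=
  F ⊆ A ∧ Convex ℝ F ∧
    ∀ x ∈ A, ∀ y ∈ A, (F ∩ openSegment ℝ x y).Nonempty → segment ℝ x y ⊆ F

/-- Normal cone of `K` at `S`, within the subspace `V`. -/
def normalConeIn {n : ℕ} (V : Submodule ℝ (Euc n)) (K S : Set (Euc n)) : Set (Euc n) :=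
  {u | u ∈ V ∧ u ≠ 0 ∧ S ⊆ suppSet K u} ∪ {0}

/-- `T` is the touching cone of `K` in direction `u` within `V`. -/
def IsTouchingConeIn {n : ℕ} (V : Submodule ℝ (Euc n)) (K : Set (Euc n)) (u : Euc n)
    (T : Set (Euc n)) : Prop :=
  IsFaceOf T (normalConeIn V K (suppSet K u)) ∧ u ∈ intrinsicInterior ℝ T

/-- Orthogonal complement (within `V`) of a set `T`. -/
def orthIn {n : ℕ} (V : Submodule ℝ (Euc n)) (T : Set (Euc n)) : Set (Euc n) :=
  {x | x ∈ V ∧ ∀ t ∈ T, (inner ℝ x t : ℝ) = 0}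

/-- Orthogonal projection onto a subspace, as a map of the ambient space. -/
def projW {n : ℕ} (W : Submodule ℝ (Euc n)) (x : Euc n) : Euc n :=
  (W.orthogonalProjectionOnto x : Euc n)

/-- The cone of `c`-cusp directions. -/
def cuspCone {n : ℕ} (c : ℝ) (u : Euc n) : Set (Euc n) :=
  {y | (inner ℝ y u : ℝ) ≤ -c * ‖y‖}

/-- `K` has a `c`-cusp in direction `u`. -/
def HasCusp {n : ℕ} (K : Set (Euc n)) (c : ℝ) (u : Euc n) : Prop :=
  ∃ x ∈ K, K ⊆ x +ᵥ cuspCone c u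

/-- `f` is linear on `A`. -/
def LinearOn {n : ℕ} (f : Euc n → ℝ) (A : Set (Euc n)) : Prop :=
  ∃ w, ∀ x ∈ A, f x = (inner ℝ x w : ℝ)

/-- A tuple of nonempty sets is semicritical. -/
def Semicritical {n ℓ : ℕ} (A : Fin ℓ → Set (Euc n)) : Prop :=
  ∀ I : Finset (Fin ℓ), I.Nonempty →
    I.card ≤ Module.finrank ℝ (Submodule.span ℝ (∑ i ∈ I, (A i - A i)) : Submodule ℝ (Euc n))

/-- Support of a measure on a topological space. -/
def measSupport {α : Type*} [TopologicalSpace α] [MeasurableSpace α] (μ : Measure α) : Set α :=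
  {x | ∀ U : Set α, IsOpen U → x ∈ U → 0 < μ U}

/-- Mixed volume of an `n`-tuple of sets in `ℝⁿ`, by inclusion–exclusion. -/
def mixedVolume {n : ℕ} (K : Fin n → Set (Euc n)) : ℝ :=
  (∑ I : Finset (Fin n), (-1 : ℝ) ^ (n - I.card) * (volume (∑ i ∈ I, K i)).toReal) / n.factorial

/-- `d`-dimensional mixed volume of a `d`-tuple of sets in `ℝⁿ`, via Hausdorff measure. -/
def mixedVolumeH {n : ℕ} (d : ℕ) (K : Fin d → Set (Euc n)) : ℝ :=
  (∑ I : Finset (Fin d), (-1 : ℝ) ^ (d - I.card) * (μH[d] (∑ i ∈ I, K i)).toReal) / d.factorial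

/-- `S` is the mixed area measure of the tuple `K`. -/
def IsMixedAreaMeasure {m : ℕ} (K : Fin m → Set (Euc (m + 1)))
    (S : Measure (Metric.sphere (0 : Euc (m + 1)) 1)) : Prop :=
  ∀ L : Set (Euc (m + 1)), Convex ℝ L → IsCompact L → L.Nonempty →
    mixedVolume (Fin.snoc K L) = ((m : ℝ) + 1)⁻¹ * ∫ u, suppFn L (u : Euc (m + 1)) ∂S

/-- A tuple of subspaces is semicritical. -/
def SemicriticalSub {n ℓ : ℕ} (V : Fin ℓ → Submodule ℝ (Euc n)) : Prop :=
  ∀ I : Finset (Fin ℓ), I.Nonempty → I.card ≤ Module.finrank ℝ (I.sup V : Submodule ℝ (Euc n))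

end

lemma euc_inner_isLinearMap {n : ℕ} (w : Euc n) :
    IsLinearMap ℝ (fun x : Euc n => (inner ℝ x w : ℝ)) :=
  ⟨fun x y => inner_add_left x y w, fun c x => real_inner_smul_left x w c⟩

lemma suppFn_poly {n : ℕ} (s : Finset (Euc n)) (hs : s.Nonempty) (w : Euc n) :
    suppFn (convexHull ℝ (s : Set (Euc n))) w = s.sup' hs (fun v => (inner ℝ v w : ℝ)) := by
  apply IsGreatest.csSup_eq
  constructor
  · obtain ⟨v, hv, hv2⟩ := s.exists_mem_eq_sup' hs (fun v => (inner ℝ v w : ℝ))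
    exact ⟨v, subset_convexHull ℝ _ hv, hv2.symm⟩
  · rintro y ⟨x, hx, rfl⟩
    have hsub : convexHull ℝ (s : Set (Euc n)) ⊆
        {x | (inner ℝ x w : ℝ) ≤ s.sup' hs (fun v => (inner ℝ v w : ℝ))} :=
      convexHull_min (fun v hv => Finset.le_sup' (fun v => (inner ℝ v w : ℝ)) (Finset.mem_coe.mp hv))
        (convex_halfSpace_le (euc_inner_isLinearMap w) _)
    exact hsub hx

lemma suppSet_poly {n : ℕ} (s : Finset (Euc n)) (hs : s.Nonempty) (w : Euc n) :
    suppSet (convexHull ℝ (s : Set (Euc n))) w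
      = convexHull ℝ ((s.filter (fun v => (inner ℝ v w : ℝ) = s.sup' hs (fun v => (inner ℝ v w : ℝ)))) :
          Set (Euc n)) := by
  classical
  set h := s.sup' hs (fun v => (inner ℝ v w : ℝ)) with hh
  apply Set.Subset.antisymm
  · rintro x ⟨hxP, hxw⟩
    rw [suppFn_poly s hs w] at hxw
    rw [Finset.convexHull_eq] at hxP
    obtain ⟨W, hW0, hW1, hWx⟩ := hxP
    have hcm : x = ∑ y ∈ s, W y • y := by
      rw [← hWx, Finset.centerMass_eq_of_sum_1 _ _ hW1]; rfl
    have hx_eq : (inner ℝ x w : ℝ) = ∑ y ∈ s, W y * (inner ℝ y w : ℝ) := by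
      rw [hcm, sum_inner]
      exact Finset.sum_congr rfl fun y _ => real_inner_smul_left y w (W y)
    have hsum0 : ∑ y ∈ s, W y * (h - (inner ℝ y w : ℝ)) = 0 := by
      have : ∑ y ∈ s, W y * (h - (inner ℝ y w : ℝ))
          = (∑ y ∈ s, W y) * h - ∑ y ∈ s, W y * (inner ℝ y w : ℝ) := by
        rw [Finset.sum_mul, ← Finset.sum_sub_distrib]
        exact Finset.sum_congr rfl fun y _ => by ring
      rw [this, hW1, ← hx_eq, hxw]; ring
    have hvanish : ∀ y ∈ s, W y * (h - (inner ℝ y w : ℝ)) = 0 := by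
      refine (Finset.sum_eq_zero_iff_of_nonneg ?_).mp hsum0
      intro y hy
      exact mul_nonneg (hW0 y hy)
        (sub_nonneg.mpr (Finset.le_sup' (fun v => (inner ℝ v w : ℝ)) hy))
    have hW0' : ∀ y ∈ s, y ∉ s.filter (fun v => (inner ℝ v w : ℝ) = h) → W y = 0 := by
      intro y hy hyn
      have hne : (inner ℝ y w : ℝ) ≠ h := by
        intro hc; exact hyn (Finset.mem_filter.mpr ⟨hy, hc⟩)
      rcases mul_eq_zero.mp (hvanish y hy) with h1 | h2
      · exact h1
      · exact absurd (by linarith [sub_eq_zero.mp h2] : (inner ℝ y w : ℝ) = h) hne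
    rw [Finset.convexHull_eq]
    refine ⟨W, fun y hy => hW0 y (Finset.filter_subset _ _ hy), ?_, ?_⟩
    · rw [Finset.sum_subset (Finset.filter_subset _ _) hW0']; exact hW1
    · rw [Finset.centerMass_eq_of_sum_1]
      · rw [hcm]
        apply Finset.sum_subset (Finset.filter_subset _ _)
        intro y hy hyn
        rw [hW0' y hy hyn, zero_smul]
      · rw [Finset.sum_subset (Finset.filter_subset _ _) hW0']; exact hW1
  · intro x hx
    refine ⟨convexHull_mono (by exact_mod_cast Finset.filter_subset _ s) hx, ?_⟩
    rw [suppFn_poly s hs w]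
    have hsub : convexHull ℝ ((s.filter (fun v => (inner ℝ v w : ℝ) = h)) : Set (Euc n)) ⊆
        {x | (inner ℝ x w : ℝ) = h} :=
      convexHull_min (fun v hv => (Finset.mem_filter.mp (Finset.mem_coe.mp hv)).2)
        (convex_hyperplane (euc_inner_isLinearMap w) _)
    exact hsub hx


lemma normalCone_poly {n : ℕ} (s : Finset (Euc n)) (hs : s.Nonempty) (u : Euc n) :
    normalConeIn ⊤ (convexHull ℝ (s : Set (Euc n))) (suppSet (convexHull ℝ (s : Set (Euc n))) u)
      = {w | ∀ v ∈ s.filter (fun v => (inner ℝ v u : ℝ) = s.sup' hs (fun v => (inner ℝ v u : ℝ))),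
              ∀ v' ∈ s, (inner ℝ (v' - v) w : ℝ) ≤ 0} := by
  classical
  ext w
  constructor
  · rintro (⟨-, hw0, hwF⟩ | hw0)
    · intro v hv v' hv'
      obtain ⟨hvs, hvu⟩ := Finset.mem_filter.mp hv
      have hvF : v ∈ suppSet (convexHull ℝ (s : Set (Euc n))) u :=
        ⟨subset_convexHull ℝ _ hvs, by rw [suppFn_poly s hs u]; exact hvu⟩
      obtain ⟨-, hvw⟩ := hwF hvF
      rw [suppFn_poly s hs w] at hvw
      have hle : (inner ℝ v' w : ℝ) ≤ (inner ℝ v w : ℝ) := by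
        rw [hvw]; exact Finset.le_sup' (fun v => (inner ℝ v w : ℝ)) hv'
      rw [inner_sub_left]; linarith
    · rw [Set.mem_singleton_iff] at hw0
      subst hw0
      intro v _ v' _
      rw [inner_zero_right]
  · intro hw
    by_cases hw0 : w = 0
    · right; exact hw0
    · left
      refine ⟨trivial, hw0, ?_⟩
      rw [suppSet_poly s hs u, suppSet_poly s hs w]
      apply convexHull_mono
      intro v hv
      obtain ⟨hvs, hvu⟩ := Finset.mem_filter.mp (Finset.mem_coe.mp hv)
      have hub : ∀ v' ∈ s, (inner ℝ v' w : ℝ) ≤ (inner ℝ v w : ℝ) := by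
        intro v' hv'
        have := hw v (Finset.mem_filter.mpr ⟨hvs, hvu⟩) v' hv'
        rw [inner_sub_left] at this; linarith
      have : (inner ℝ v w : ℝ) = s.sup' hs (fun v => (inner ℝ v w : ℝ)) :=
        le_antisymm (Finset.le_sup' (fun v => (inner ℝ v w : ℝ)) hvs) (Finset.sup'_le hs _ hub)
      exact Finset.mem_coe.mpr (Finset.mem_filter.mpr ⟨hvs, this⟩)

lemma exists_eps {n : ℕ} (s : Finset (Euc n)) (hs : s.Nonempty) (u : Euc n) (w : Euc n)
    (hw : ∀ v ∈ s.filter (fun v => (inner ℝ v u : ℝ) = s.sup' hs (fun v => (inner ℝ v u : ℝ))),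
      ∀ v' ∈ s.filter (fun v => (inner ℝ v u : ℝ) = s.sup' hs (fun v => (inner ℝ v u : ℝ))),
        (inner ℝ (v' - v) w : ℝ) = 0) :
    ∃ ε : ℝ, 0 < ε ∧ ∀ v ∈ s.filter (fun v => (inner ℝ v u : ℝ) = s.sup' hs (fun v => (inner ℝ v u : ℝ))),
      ∀ v' ∈ s, (inner ℝ (v' - v) (u + ε • w) : ℝ) ≤ 0 := by
  classical
  set h := s.sup' hs (fun v => (inner ℝ v u : ℝ)) with hh
  set s₀ := s.filter (fun v => (inner ℝ v u : ℝ) = h) with hs₀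
  have h₀ : s₀.Nonempty := by
    obtain ⟨v, hv, hv2⟩ := s.exists_mem_eq_sup' hs (fun v => (inner ℝ v u : ℝ))
    exact ⟨v, Finset.mem_filter.mpr ⟨hv, hv2.symm⟩⟩
  have hQ : (s₀ ×ˢ s).Nonempty := h₀.product hs
  set g : Euc n × Euc n → ℝ := fun p =>
    if (inner ℝ p.2 u : ℝ) = h then 1
    else (h - (inner ℝ p.2 u : ℝ)) / (1 + |(inner ℝ (p.2 - p.1) w : ℝ)|) with hg
  set ε := (s₀ ×ˢ s).inf' hQ g with hε
  have hεpos : 0 < ε := by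
    rw [hε, Finset.lt_inf'_iff]
    intro p hp
    rw [hg]
    dsimp only
    split_ifs with hcase
    · exact one_pos
    · apply div_pos
      · have hle : (inner ℝ p.2 u : ℝ) ≤ h :=
          Finset.le_sup' (fun v => (inner ℝ v u : ℝ)) (Finset.mem_product.mp hp).2
        cases lt_or_eq_of_le hle with
        | inl hlt => linarith
        | inr heq => exact absurd heq hcase
      · positivity
  refine ⟨ε, hεpos, ?_⟩
  intro v hv v' hv'
  have hvu : (inner ℝ v u : ℝ) = h := (Finset.mem_filter.mp hv).2
  have hiu : (inner ℝ (v' - v) u : ℝ) = (inner ℝ v' u : ℝ) - h := by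
    rw [inner_sub_left, hvu]
  have hexp : (inner ℝ (v' - v) (u + ε • w) : ℝ)
      = ((inner ℝ v' u : ℝ) - h) + ε * (inner ℝ (v' - v) w : ℝ) := by
    rw [inner_add_right, real_inner_smul_right, hiu]
  rw [hexp]
  by_cases hcase : (inner ℝ v' u : ℝ) = h
  · have hv'0 : v' ∈ s₀ := Finset.mem_filter.mpr ⟨hv', hcase⟩
    rw [hw v hv v' hv'0, hcase]
    simp
  · have hpmem : (v, v') ∈ s₀ ×ˢ s := Finset.mem_product.mpr ⟨hv, hv'⟩
    have h3 : g (v, v') = (h - (inner ℝ v' u : ℝ)) / (1 + |(inner ℝ (v' - v) w : ℝ)|) := by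
      rw [hg]; dsimp only; rw [if_neg hcase]
    have hεle : ε ≤ (h - (inner ℝ v' u : ℝ)) / (1 + |(inner ℝ (v' - v) w : ℝ)|) := by
      rw [← h3]; exact Finset.inf'_le g hpmem
    set c := (inner ℝ (v' - v) w : ℝ)
    have hd : (0 : ℝ) < 1 + |c| := by positivity
    have h1 : ε * (1 + |c|) ≤ h - (inner ℝ v' u : ℝ) := by
      rw [← le_div_iff₀ hd]; exact hεle
    have h2 : ε * c ≤ ε * (1 + |c|) := by
      apply mul_le_mul_of_nonneg_left _ hεpos.le
      have := le_abs_self c; linarith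
    linarith

/-- Lemma: for a polytope `P` and `u ≠ 0`, the touching cone equals the normal cone at the
support set, and the touching space equals the linear subspace parallel to `F(P, u)`. -/
theorem touchingCone_eq_normalCone_of_polytope {n : ℕ} (s : Finset (Euc n)) (hs : s.Nonempty)
    (P : Set (Euc n)) (hP : P = convexHull ℝ (s : Set (Euc n)))
    (u : Euc n) (hu : u ≠ 0) (T : Set (Euc n))
    (hT : IsTouchingConeIn ⊤ P u T) :
    T = normalConeIn ⊤ P (suppSet P u) ∧
      orthIn ⊤ T = (Submodule.span ℝ (suppSet P u - suppSet P u) : Set (Euc n)) := by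
  classical
  subst hP
  set P := convexHull ℝ (s : Set (Euc n)) with hPdef
  set h := s.sup' hs (fun v => (inner ℝ v u : ℝ)) with hh
  set s₀ := s.filter (fun v => (inner ℝ v u : ℝ) = h) with hs₀def
  set N := normalConeIn ⊤ P (suppSet P u) with hNdef
  have hNC : N = {w | ∀ v ∈ s₀, ∀ v' ∈ s, (inner ℝ (v' - v) w : ℝ) ≤ 0} := normalCone_poly s hs u
  have hF : suppSet P u = convexHull ℝ (s₀ : Set (Euc n)) := suppSet_poly s hs u
  have h₀ : s₀.Nonempty := by
    obtain ⟨v, hv, hv2⟩ := s.exists_mem_eq_sup' hs (fun v => (inner ℝ v u : ℝ))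
    exact ⟨v, Finset.mem_filter.mpr ⟨hv, hv2.symm⟩⟩
  have huT : u ∈ T := intrinsicInterior_subset hT.2
  have huN : u ∈ N := by
    rw [hNC]
    intro v hv v' hv'
    have hvu : (inner ℝ v u : ℝ) = h := (Finset.mem_filter.mp hv).2
    have hle : (inner ℝ v' u : ℝ) ≤ h := Finset.le_sup' (fun v => (inner ℝ v u : ℝ)) hv'
    rw [inner_sub_left, hvu]; linarith
  have hTsubN : T ⊆ N := hT.1.1
  have hNsubT : N ⊆ T := by
    intro x hx
    have hx0 : ∀ v ∈ s₀, ∀ v' ∈ s, (inner ℝ (v' - v) x : ℝ) ≤ 0 := by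
      rw [hNC] at hx; exact hx
    have hw0 : ∀ v ∈ s₀, ∀ v' ∈ s₀, (inner ℝ (v' - v) (u - x) : ℝ) = 0 := by
      intro v hv v' hv'
      have h1 := hx0 v hv v' (Finset.mem_filter.mp hv').1
      have h2 := hx0 v' hv' v (Finset.mem_filter.mp hv).1
      have hvu : (inner ℝ v u : ℝ) = h := (Finset.mem_filter.mp hv).2
      have hv'u : (inner ℝ v' u : ℝ) = h := (Finset.mem_filter.mp hv').2
      rw [inner_sub_left] at h1 h2
      rw [inner_sub_right, inner_sub_left, inner_sub_left, hvu, hv'u]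
      linarith
    obtain ⟨ε, hεpos, hy⟩ := exists_eps s hs u (u - x) hw0
    set y := u + ε • (u - x) with hydef
    have hyN : y ∈ N := by rw [hNC]; exact hy
    have h1ε : (0:ℝ) < 1 + ε := by linarith
    have huSeg : u ∈ openSegment ℝ x y := by
      refine ⟨ε / (1 + ε), 1 / (1 + ε), div_pos hεpos h1ε, div_pos one_pos h1ε, ?_, ?_⟩
      · rw [← add_div, add_comm, div_self h1ε.ne']
      · rw [hydef]
        match_scalars <;> field_simp <;> ring
    exact hT.1.2.2 x hx y hyN ⟨u, huT, huSeg⟩ (left_mem_segment ℝ x y)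
  have hTN : T = N := Set.Subset.antisymm hTsubN hNsubT
  refine ⟨hTN, ?_⟩
  rw [hTN]
  set L := Submodule.span ℝ (suppSet P u - suppSet P u) with hLdef
  ext z
  simp only [orthIn, Set.mem_setOf_eq, Submodule.mem_top, true_and, SetLike.mem_coe]
  constructor
  · intro hz
    set pz : Euc n := ((L.orthogonalProjectionOnto z : L) : Euc n) with hpzdef
    have hpzL : pz ∈ L := (L.orthogonalProjectionOnto z).2
    have hwperp : z - pz ∈ Lᗮ := Submodule.sub_starProjection_mem_orthogonal (K := L) z
    have hw0 : ∀ v ∈ s₀, ∀ v' ∈ s₀, (inner ℝ (v' - v) (z - pz) : ℝ) = 0 := by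
      intro v hv v' hv'
      have hvF : v ∈ suppSet P u := by
        rw [hF]; exact subset_convexHull ℝ _ (Finset.mem_coe.mpr hv)
      have hv'F : v' ∈ suppSet P u := by
        rw [hF]; exact subset_convexHull ℝ _ (Finset.mem_coe.mpr hv')
      have hmem : v' - v ∈ L := Submodule.subset_span (Set.sub_mem_sub hv'F hvF)
      exact (Submodule.mem_orthogonal L (z - pz)).mp hwperp _ hmem
    obtain ⟨ε, hεpos, hy⟩ := exists_eps s hs u (z - pz) hw0
    have hyN : u + ε • (z - pz) ∈ N := by rw [hNC]; exact hy
    have hz1 : (inner ℝ z (u + ε • (z - pz)) : ℝ) = 0 := hz _ hyN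
    have hz2 : (inner ℝ z u : ℝ) = 0 := hz u huN
    have hz3 : (inner ℝ z (z - pz) : ℝ) = 0 := by
      rw [inner_add_right, real_inner_smul_right, hz2] at hz1
      have hmul : ε * (inner ℝ z (z - pz) : ℝ) = 0 := by linarith
      exact (mul_eq_zero.mp hmul).resolve_left hεpos.ne'
    have hpz3 : (inner ℝ pz (z - pz) : ℝ) = 0 :=
      (Submodule.mem_orthogonal L (z - pz)).mp hwperp pz hpzL
    have hself : (inner ℝ (z - pz) (z - pz) : ℝ) = 0 := by
      rw [inner_sub_left, hz3, hpz3]; ring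
    have hzeq : z = pz := sub_eq_zero.mp (inner_self_eq_zero.mp hself)
    rw [hzeq]; exact hpzL
  · intro hzL t ht
    rw [hNC] at ht
    obtain ⟨v₀, hv₀⟩ := h₀
    have hconst : ∀ v ∈ (s₀ : Set (Euc n)), (inner ℝ v t : ℝ) = (inner ℝ v₀ t : ℝ) := by
      intro v hv
      have hv' := Finset.mem_coe.mp hv
      have h1 := ht v₀ hv₀ v (Finset.mem_filter.mp hv').1
      have h2 := ht v hv' v₀ (Finset.mem_filter.mp hv₀).1
      rw [inner_sub_left] at h1 h2
      linarith
    have hhyper : suppSet P u ⊆ {x | (inner ℝ x t : ℝ) = (inner ℝ v₀ t : ℝ)} := by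
      rw [hF]
      exact convexHull_min hconst (convex_hyperplane (euc_inner_isLinearMap t) _)
    have hker : suppSet P u - suppSet P u ⊆
        (LinearMap.ker ((euc_inner_isLinearMap t).mk' _) : Set (Euc n)) := by
      rintro y ⟨x1, hx1, x2, hx2, rfl⟩
      show (inner ℝ (x1 - x2) t : ℝ) = 0
      rw [inner_sub_left, hhyper hx1, hhyper hx2, sub_self]
    exact Submodule.span_le.mpr hker hzL
end

section
/- Let P = conv{v₁,…,v_ℓ} be a polytope in ℝⁿ, u ∈ ℝⁿ \ {0}, and I_u = {i ∈ [ℓ] : v_i ∈ F(P,u)}. Then there exists ε ∈ (0, ‖u‖) such that for all v, w₁, …, w_ℓ ∈ ℝⁿ with d(u,v) < ε and d(v_i, w_i) < ε for all i, the polytope Q = conv{w₁,…,w_ℓ} satisfies F(Q,v) ⊆ conv{w_i : i ∈ I_u}. -/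
open Set MeasureTheory Metric
open scoped Pointwise

section helpers

open Finset in
lemma suppFn_hull_eq {n ℓ : ℕ} (hun : (Finset.univ : Finset (Fin ℓ)).Nonempty)
    (w : Fin ℓ → Euc n) (v' : Euc n) :
    suppFn (convexHull ℝ (Set.range w)) v' =
      Finset.univ.sup' hun (fun i => (inner ℝ (w i) v' : ℝ)) := by
  set M' := Finset.univ.sup' hun (fun i => (inner ℝ (w i) v' : ℝ)) with hM'
  have hlin : IsLinearMap ℝ (fun x : Euc n => (inner ℝ x v' : ℝ)) :=
    ⟨fun a b => inner_add_left a b v', fun c x => real_inner_smul_left x v' c⟩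
  have hsub : convexHull ℝ (Set.range w) ⊆ {x | (inner ℝ x v' : ℝ) ≤ M'} := by
    apply convexHull_min
    · rintro x ⟨i, rfl⟩
      exact Finset.le_sup' (fun i => (inner ℝ (w i) v' : ℝ)) (Finset.mem_univ i)
    · exact convex_halfSpace_le hlin M'
  have hbdd : BddAbove ((fun x => (inner ℝ x v' : ℝ)) '' convexHull ℝ (Set.range w)) := by
    refine ⟨M', ?_⟩
    rintro y ⟨x, hx, rfl⟩
    exact hsub hx
  obtain ⟨i₀, -, hi₀⟩ := Finset.exists_mem_eq_sup' hun (fun i => (inner ℝ (w i) v' : ℝ))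
  refine le_antisymm (csSup_le ?_ ?_) ?_
  · exact ⟨_, ⟨w i₀, subset_convexHull ℝ _ ⟨i₀, rfl⟩, rfl⟩⟩
  · rintro y ⟨x, hx, rfl⟩; exact hsub hx
  · exact le_of_eq_of_le hi₀ (le_csSup hbdd ⟨w i₀, subset_convexHull ℝ _ ⟨i₀, rfl⟩, rfl⟩)

end helpers

/-- Facial stability for polytopes. -/
theorem facial_stability {n ℓ : ℕ} (v : Fin ℓ → Euc n) (P : Set (Euc n))
    (hP : P = convexHull ℝ (Set.range v)) (u : Euc n) (hu : u ≠ 0) :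
    ∃ ε : ℝ, 0 < ε ∧ ε < ‖u‖ ∧
      ∀ (v' : Euc n) (w : Fin ℓ → Euc n), dist u v' < ε → (∀ i, dist (v i) (w i) < ε) →
        suppSet (convexHull ℝ (Set.range w)) v' ⊆
          convexHull ℝ (w '' {i | v i ∈ suppSet P u}) := by
  classical
  rcases Nat.eq_zero_or_pos ℓ with hℓ | hℓ
  · subst hℓ
    refine ⟨‖u‖ / 2, half_pos (norm_pos_iff.2 hu), half_lt_self (norm_pos_iff.2 hu), ?_⟩
    intro v' w _ _
    have h0 : Set.range w = (∅ : Set (Euc n)) := Set.range_eq_empty w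
    have h1 : suppSet (convexHull ℝ (Set.range w)) v' = ∅ := by
      rw [h0, convexHull_empty]
      simp [suppSet]
    rw [h1]
    exact Set.empty_subset _
  · have hun : (Finset.univ : Finset (Fin ℓ)).Nonempty := ⟨⟨0, hℓ⟩, Finset.mem_univ _⟩
    set M : ℝ := Finset.univ.sup' hun (fun i => (inner ℝ (v i) u : ℝ)) with hM
    have hsuppP : suppFn P u = M := by rw [hP]; exact suppFn_hull_eq hun v u
    -- the gap δ
    obtain ⟨δ, hδpos, hδ⟩ : ∃ δ : ℝ, 0 < δ ∧
        ∀ i : Fin ℓ, (inner ℝ (v i) u : ℝ) ≠ M → (inner ℝ (v i) u : ℝ) ≤ M - δ := by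
      set s : Finset (Fin ℓ) := Finset.univ.filter (fun i => (inner ℝ (v i) u : ℝ) ≠ M) with hs
      by_cases hsne : s.Nonempty
      · refine ⟨M - s.sup' hsne (fun i => (inner ℝ (v i) u : ℝ)), ?_, ?_⟩
        · obtain ⟨j, hj, hjs⟩ := Finset.exists_mem_eq_sup' hsne (fun i => (inner ℝ (v i) u : ℝ))
          have hjne : (inner ℝ (v j) u : ℝ) ≠ M := (Finset.mem_filter.1 hj).2
          have hjle : (inner ℝ (v j) u : ℝ) ≤ M :=
            Finset.le_sup' (fun i => (inner ℝ (v i) u : ℝ)) (Finset.mem_univ j)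
          have : s.sup' hsne (fun i => (inner ℝ (v i) u : ℝ)) < M := by
            rw [hjs]; exact lt_of_le_of_ne hjle hjne
          linarith
        · intro i hi
          have : i ∈ s := Finset.mem_filter.2 ⟨Finset.mem_univ i, hi⟩
          have := Finset.le_sup' (s := s) (fun i => (inner ℝ (v i) u : ℝ)) this
          linarith
      · refine ⟨1, one_pos, fun i hi => absurd ⟨i, Finset.mem_filter.2 ⟨Finset.mem_univ i, hi⟩⟩ hsne⟩
    set B : ℝ := Finset.univ.sup' hun (fun i => ‖v i‖) with hB
    have hB0 : 0 ≤ B := le_trans (norm_nonneg (v ⟨0, hℓ⟩))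
      (Finset.le_sup' (fun i => ‖v i‖) (Finset.mem_univ _))
    have hu0 : (0 : ℝ) < ‖u‖ := norm_pos_iff.2 hu
    set ε : ℝ := min (‖u‖ / 2) (δ / (4 * ‖u‖ + 2 * B + 1)) with hε
    have hεpos : 0 < ε := lt_min (by positivity) (by positivity)
    refine ⟨ε, hεpos, lt_of_le_of_lt (min_le_left _ _) (half_lt_self hu0), ?_⟩
    intro v' w hv' hw x hx
    set M' : ℝ := Finset.univ.sup' hun (fun i => (inner ℝ (w i) v' : ℝ)) with hM'
    have hεu : ε ≤ ‖u‖ := le_trans (min_le_left _ _) (by linarith)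
    -- error estimate
    have herr : ∀ i : Fin ℓ, |(inner ℝ (w i) v' : ℝ) - (inner ℝ (v i) u : ℝ)| < δ / 2 := by
      intro i
      have h1 : (inner ℝ (w i) v' : ℝ) - (inner ℝ (v i) u : ℝ)
          = (inner ℝ (w i - v i) v' : ℝ) + (inner ℝ (v i) (v' - u) : ℝ) := by
        rw [inner_sub_left, inner_sub_right]; ring
      have h2 : |(inner ℝ (w i - v i) v' : ℝ)| ≤ ‖w i - v i‖ * ‖v'‖ := abs_real_inner_le_norm _ _
      have h3 : |(inner ℝ (v i) (v' - u) : ℝ)| ≤ ‖v i‖ * ‖v' - u‖ := abs_real_inner_le_norm _ _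
      have hdist1 : ‖w i - v i‖ < ε := by rw [← dist_eq_norm]; rw [dist_comm]; exact hw i
      have hdist2 : ‖v' - u‖ < ε := by rw [← dist_eq_norm]; rw [dist_comm]; exact hv'
      have hv'norm : ‖v'‖ ≤ 2 * ‖u‖ := by
        have := norm_sub_norm_le v' u
        linarith [hdist2.le.trans hεu]
      have hvB : ‖v i‖ ≤ B := Finset.le_sup' (fun i => ‖v i‖) (Finset.mem_univ i)
      have hεδ : ε ≤ δ / (4 * ‖u‖ + 2 * B + 1) := min_le_right _ _
      have hden : (0:ℝ) < 4 * ‖u‖ + 2 * B + 1 := by positivity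
      have key : ε * (2 * ‖u‖ + B) < δ / 2 := by
        have h4 : ε * (4 * ‖u‖ + 2 * B + 1) ≤ δ := by
          rw [← le_div_iff₀ hden] at *; exact hεδ
        nlinarith
      calc |(inner ℝ (w i) v' : ℝ) - (inner ℝ (v i) u : ℝ)|
          ≤ |(inner ℝ (w i - v i) v' : ℝ)| + |(inner ℝ (v i) (v' - u) : ℝ)| := by
            rw [h1]; exact abs_add_le _ _
        _ ≤ ‖w i - v i‖ * ‖v'‖ + ‖v i‖ * ‖v' - u‖ := add_le_add h2 h3
        _ ≤ ε * (2 * ‖u‖) + B * ε := by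
            apply add_le_add
            · exact mul_le_mul hdist1.le hv'norm (norm_nonneg _) hεpos.le
            · exact mul_le_mul hvB hdist2.le (norm_nonneg _) hB0
        _ = ε * (2 * ‖u‖ + B) := by ring
        _ < δ / 2 := key
    -- argmax of perturbed functional lies in I
    obtain ⟨j, -, hj⟩ := Finset.exists_mem_eq_sup' hun (fun i => (inner ℝ (v i) u : ℝ))
    have hjM : (inner ℝ (v j) u : ℝ) = M := hj.symm
    have hargmax : ∀ i : Fin ℓ, (inner ℝ (w i) v' : ℝ) = M' → (inner ℝ (v i) u : ℝ) = M := by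
      intro i hi
      by_contra hne
      have h1 : (inner ℝ (v i) u : ℝ) ≤ M - δ := hδ i hne
      have h2 : (inner ℝ (w i) v' : ℝ) < M - δ + δ / 2 := by
        have := (abs_lt.1 (herr i)).2; linarith
      have h3 : M - δ / 2 < (inner ℝ (w j) v' : ℝ) := by
        have := (abs_lt.1 (herr j)).1; linarith [hjM]
      have h4 : (inner ℝ (w j) v' : ℝ) ≤ M' :=
        Finset.le_sup' (fun i => (inner ℝ (w i) v' : ℝ)) (Finset.mem_univ j)
      rw [hi] at h2
      linarith
    -- unpack membership in the support set
    obtain ⟨hxQ, hxval⟩ := hx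
    have hsuppQ : suppFn (convexHull ℝ (Set.range w)) v' = M' := suppFn_hull_eq hun w v'
    rw [hsuppQ] at hxval
    -- representation of x as convex combination
    rw [convexHull_range_eq_exists_affineCombination] at hxQ
    obtain ⟨s, lam, hlam0, hlam1, haff⟩ := hxQ
    have hcm : s.centerMass lam w = x := by
      rw [← affineCombination_eq_centerMass hlam1]; exact haff
    have hxsum : x = ∑ i ∈ s, lam i • w i := by
      rw [← hcm, Finset.centerMass_eq_of_sum_1 _ _ hlam1]
    have hinner : ∑ i ∈ s, lam i * (inner ℝ (w i) v' : ℝ) = M' := by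
      rw [← hxval, hxsum, sum_inner]
      exact Finset.sum_congr rfl fun i _ => (real_inner_smul_left _ _ _).symm
    have hzero : ∀ i ∈ s, lam i * (M' - (inner ℝ (w i) v' : ℝ)) = 0 := by
      have hsum0 : ∑ i ∈ s, lam i * (M' - (inner ℝ (w i) v' : ℝ)) = 0 := by
        have : ∑ i ∈ s, lam i * M' = M' := by
          rw [← Finset.sum_mul, hlam1, one_mul]
        calc ∑ i ∈ s, lam i * (M' - (inner ℝ (w i) v' : ℝ))
            = (∑ i ∈ s, lam i * M') - ∑ i ∈ s, lam i * (inner ℝ (w i) v' : ℝ) := by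
              rw [← Finset.sum_sub_distrib]; exact Finset.sum_congr rfl fun i _ => by ring
          _ = 0 := by rw [this, hinner]; ring
      have hnn : ∀ i ∈ s, 0 ≤ lam i * (M' - (inner ℝ (w i) v' : ℝ)) := fun i hi =>
        mul_nonneg (hlam0 i hi) (by
          have := Finset.le_sup' (fun i => (inner ℝ (w i) v' : ℝ)) (Finset.mem_univ i)
          linarith)
      exact (Finset.sum_eq_zero_iff_of_nonneg hnn).1 hsum0
    -- conclude
    have hfilter : (s.filter (fun i => lam i ≠ 0)).centerMass lam w = x := by
      rw [Finset.centerMass_filter_ne_zero]; exact hcm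
    rw [← hfilter]
    apply Finset.centerMass_mem_convexHull
    · exact fun i hi => hlam0 i (Finset.mem_filter.1 hi).1
    · rw [Finset.sum_filter_ne_zero, hlam1]; exact one_pos
    · intro i hi
      obtain ⟨his, hine⟩ := Finset.mem_filter.1 hi
      have heq : (inner ℝ (w i) v' : ℝ) = M' := by
        have := hzero i his
        rcases mul_eq_zero.1 this with h | h
        · exact absurd h hine
        · linarith
      have hvi : (inner ℝ (v i) u : ℝ) = M := hargmax i heq
      refine ⟨i, ?_, rfl⟩
      have hviP : v i ∈ P := by rw [hP]; exact subset_convexHull ℝ _ ⟨i, rfl⟩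
      exact ⟨hviP, by rw [hsuppP, hvi]⟩
end

section
/- Let K ⊆ ℝⁿ be a convex body, W ⊆ ℝⁿ a linear subspace, and u ∈ W \ {0}. Then the normal cone of the projection satisfies N_W(π_W(K), F(π_W(K),u)) = W ∩ N(K, F(K,u)). -/
open Set MeasureTheory Metric
open scoped Pointwise

lemma inner_projW_eq {n : ℕ} (W : Submodule ℝ (Euc n)) {w : Euc n} (hw : w ∈ W) (x : Euc n) :
    (inner ℝ (projW W x) w : ℝ) = inner ℝ x w := by
  have h : x - projW W x ∈ Wᗮ := W.sub_starProjection_mem_orthogonal x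
  have h0 : (inner ℝ (x - projW W x) w : ℝ) = 0 := by rw [real_inner_comm]; exact h w hw
  rw [inner_sub_left] at h0
  linarith

lemma suppFn_projW {n : ℕ} (W : Submodule ℝ (Euc n)) (K : Set (Euc n)) {w : Euc n}
    (hw : w ∈ W) : suppFn (projW W '' K) w = suppFn K w := by
  unfold suppFn
  congr 1
  rw [image_image]
  exact image_congr fun x _ => inner_projW_eq W hw x

lemma mem_suppSet_iff_proj {n : ℕ} (W : Submodule ℝ (Euc n)) (K : Set (Euc n)) {w : Euc n}
    (hw : w ∈ W) {x : Euc n} (hx : x ∈ K) :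
    x ∈ suppSet K w ↔ projW W x ∈ suppSet (projW W '' K) w := by
  simp only [suppSet, mem_setOf_eq, suppFn_projW W K hw, inner_projW_eq W hw]
  exact ⟨fun h => ⟨mem_image_of_mem _ hx, h.2⟩, fun h => ⟨hx, h.2⟩⟩

lemma suppSet_projW {n : ℕ} (W : Submodule ℝ (Euc n)) (K : Set (Euc n)) {w : Euc n}
    (hw : w ∈ W) : suppSet (projW W '' K) w = projW W '' suppSet K w := by
  ext y
  constructor
  · rintro ⟨⟨x, hx, rfl⟩, hy⟩
    exact ⟨x, (mem_suppSet_iff_proj W K hw hx).2 ⟨mem_image_of_mem _ hx, hy⟩, rfl⟩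
  · rintro ⟨x, hx, rfl⟩
    exact (mem_suppSet_iff_proj W K hw hx.1).1 hx

/-- The normal cone of the projected body within `W` is the intersection of `W` with the
normal cone of the body. -/
theorem normalCone_proj {n : ℕ} (K : Set (Euc n)) (hKconv : Convex ℝ K)
    (hKcomp : IsCompact K) (hKne : K.Nonempty)
    (W : Submodule ℝ (Euc n)) (u : Euc n) (huW : u ∈ W) (hu : u ≠ 0) :
    normalConeIn W (projW W '' K) (suppSet (projW W '' K) u) =
      (W : Set (Euc n)) ∩ normalConeIn ⊤ K (suppSet K u) := by
  have key : ∀ v ∈ W, v ≠ 0 →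
      (suppSet (projW W '' K) u ⊆ suppSet (projW W '' K) v ↔ suppSet K u ⊆ suppSet K v) := by
    intro v hv hv0
    constructor
    · intro h x hx
      have hxK : x ∈ K := hx.1
      have := (mem_suppSet_iff_proj W K huW hxK).1 hx
      exact (mem_suppSet_iff_proj W K hv hxK).2 (h this)
    · intro h
      rw [suppSet_projW W K huW, suppSet_projW W K hv]
      exact image_mono h
  ext v
  simp only [normalConeIn, mem_union, mem_setOf_eq, mem_inter_iff, mem_singleton_iff,
    SetLike.mem_coe, Submodule.mem_top, true_and]
  constructor
  · rintro (⟨hvW, hv0, hsub⟩ | rfl)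
    · exact ⟨hvW, Or.inl ⟨hv0, (key v hvW hv0).1 hsub⟩⟩
    · exact ⟨W.zero_mem, Or.inr rfl⟩
  · rintro ⟨hvW, (⟨hv0, hsub⟩ | rfl)⟩
    · exact Or.inl ⟨hvW, hv0, (key v hvW hv0).2 hsub⟩
    · exact Or.inr rfl
end

section
/- Let A ⊆ ℝⁿ be a convex set and f : ℝⁿ → ℝ positively 1-homogeneous. Then the following are equivalent: (a) f agrees on A with a linear function x ↦ ⟨x,u⟩; (b) f agrees on A with an affine function x ↦ ⟨x,u⟩ + c; (c) the restriction of f to A is both convex and concave. -/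
open Set MeasureTheory Metric
open scoped Pointwise

section PosHomAux

variable {n : ℕ} {A : Set (Euc n)} {f : Euc n → ℝ}

lemma posHom_f_zero (hf : ∀ r : ℝ, 0 ≤ r → ∀ x, f (r • x) = r * f x) : f 0 = 0 := by
  have := hf 0 le_rfl 0; simpa using this

lemma posHom_add2 (hA : Convex ℝ A)
    (hf : ∀ r : ℝ, 0 ≤ r → ∀ x, f (r • x) = r * f x)
    (hcv : ConvexOn ℝ A f) (hcc : ConcaveOn ℝ A f)
    {a b : ℝ} {x y : Euc n} (ha : 0 ≤ a) (hb : 0 ≤ b) (hx : x ∈ A) (hy : y ∈ A) :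
    f (a • x + b • y) = a * f x + b * f y := by
  rcases eq_or_lt_of_le (add_nonneg ha hb) with h0 | hpos
  · have ha0 : a = 0 := by linarith
    have hb0 : b = 0 := by linarith
    simp [ha0, hb0, posHom_f_zero hf]
  · set c := a + b with hc
    have hcne : c ≠ 0 := ne_of_gt hpos
    have hab : a / c + b / c = 1 := by field_simp; exact hc.symm
    have h1 : f ((a/c) • x + (b/c) • y) = (a/c) * f x + (b/c) * f y :=
      le_antisymm (hcv.2 hx hy (div_nonneg ha hpos.le) (div_nonneg hb hpos.le) hab)
        (hcc.2 hx hy (div_nonneg ha hpos.le) (div_nonneg hb hpos.le) hab)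
    have h2 : a • x + b • y = c • ((a/c) • x + (b/c) • y) := by
      rw [smul_add, smul_smul, smul_smul]
      field_simp
    rw [h2, hf c hpos.le, h1]
    field_simp


lemma posHom_keyP (hA : Convex ℝ A)
    (hf : ∀ r : ℝ, 0 ≤ r → ∀ x, f (r • x) = r * f x)
    (hcv : ConvexOn ℝ A f) (hcc : ConcaveOn ℝ A f)
    (F : Finset (Euc n)) (t : Euc n → ℝ) (ht : ∀ v ∈ F, 0 ≤ t v) (hFA : ∀ v ∈ F, v ∈ A) :
    ∀ (s : ℝ) (x : Euc n), 0 ≤ s → x ∈ A →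
      f (s • x + ∑ v ∈ F, t v • v) = s * f x + ∑ v ∈ F, t v * f v := by
  classical
  induction F using Finset.induction with
  | empty => intro s x hs hx; simp [hf s hs x]
  | @insert a F haF ih =>
    intro s x hs hx
    have hta : 0 ≤ t a := ht a (Finset.mem_insert_self a F)
    have haA : a ∈ A := hFA a (Finset.mem_insert_self a F)
    have ht' : ∀ v ∈ F, 0 ≤ t v := fun v hv => ht v (Finset.mem_insert_of_mem hv)
    have hFA' : ∀ v ∈ F, v ∈ A := fun v hv => hFA v (Finset.mem_insert_of_mem hv)
    rw [Finset.sum_insert haF, Finset.sum_insert haF]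
    rcases eq_or_lt_of_le (add_nonneg hs hta) with h0 | hpos
    · have hs0 : s = 0 := by linarith
      have hta0 : t a = 0 := by linarith
      have := ih ht' hFA' 0 x le_rfl hx
      simpa [hs0, hta0] using this
    · set s' := s + t a with hs'
      have hs'ne : s' ≠ 0 := ne_of_gt hpos
      set y := (s/s') • x + (t a/s') • a with hy
      have hyA : y ∈ A := hA hx haA (div_nonneg hs hpos.le) (div_nonneg hta hpos.le)
        (by field_simp; exact hs'.symm)
      have hsy : s' • y = s • x + t a • a := by
        rw [hy, smul_add, smul_smul, smul_smul]
        field_simp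
      have e1 : s • x + (t a • a + ∑ v ∈ F, t v • v) = s' • y + ∑ v ∈ F, t v • v := by
        rw [hsy]; abel
      rw [e1, ih ht' hFA' s' y hpos.le hyA]
      have : s' * f y = s * f x + t a * f a := by
        rw [← hf s' hpos.le y, hsy, posHom_add2 hA hf hcv hcc hs hta hx haA]
      rw [this]; ring

lemma posHom_linearOn_of_affine (hA : Convex ℝ A)
    (hf : ∀ r : ℝ, 0 ≤ r → ∀ x, f (r • x) = r * f x)
    (hcv : ConvexOn ℝ A f) (hcc : ConcaveOn ℝ A f) :
    ∃ w : Euc n, ∀ x ∈ A, f x = (inner ℝ x w : ℝ) := by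
  classical
  obtain ⟨b, hbA, hsp, hli⟩ := exists_linearIndependent ℝ A
  have hfin : b.Finite := hli.setFinite
  let B := Module.Basis.extend hli
  let L : Euc n →ₗ[ℝ] ℝ := B.constr ℝ (fun v => f ↑v)
  have hLb : ∀ v ∈ b, L v = f v := by
    intro v hv
    have hvmem : v ∈ (show LinearIndepOn ℝ id b from hli).extend (Set.subset_univ b) := (show LinearIndepOn ℝ id b from hli).subset_extend _ hv
    have h1 : B ⟨v, hvmem⟩ = v := Module.Basis.extend_apply_self hli ⟨v, hvmem⟩
    have h2 : L (B ⟨v, hvmem⟩) = f v := B.constr_basis ℝ (fun v => f ↑v) ⟨v, hvmem⟩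
    rwa [h1] at h2
  set w := (InnerProductSpace.toDual ℝ (Euc n)).symm (LinearMap.toContinuousLinearMap L) with hw
  refine ⟨w, fun x hx => ?_⟩
  have hinner : (inner ℝ x w : ℝ) = L x := by
    rw [real_inner_comm, hw]
    exact InnerProductSpace.toDual_symm_apply
  rw [hinner]
  -- x ∈ span of b
  have hxsp : x ∈ Submodule.span ℝ (↑hfin.toFinset : Set (Euc n)) := by
    rw [hfin.coe_toFinset, hsp]
    exact Submodule.subset_span hx
  obtain ⟨c, -, hc⟩ := Submodule.mem_span_finset.mp hxsp
  set F := hfin.toFinset with hF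
  have hFb : ∀ v ∈ F, v ∈ b := fun v hv => hfin.mem_toFinset.mp hv
  have hFA : ∀ v ∈ F, v ∈ A := fun v hv => hbA (hFb v hv)
  -- the rearrangement identity
  have hmax : ∀ r : ℝ, r = max r 0 - max (-r) 0 := fun r => by
    rcases le_total r 0 with h | h
    · simp [max_eq_right h, max_eq_left (neg_nonneg.mpr h)]
    · simp [max_eq_left h, max_eq_right (neg_nonpos.mpr h)]
  have e1 : (1:ℝ) • x + ∑ v ∈ F, max (-(c v)) 0 • v
      = (0:ℝ) • x + ∑ v ∈ F, max (c v) 0 • v := by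
    rw [one_smul, zero_smul, zero_add, ← hc, ← Finset.sum_add_distrib]
    apply Finset.sum_congr rfl
    intro v _
    rw [← add_smul]
    congr 1
    nth_rewrite 1 [hmax (c v)]
    ring
  have k1 := posHom_keyP hA hf hcv hcc F (fun v => max (-(c v)) 0)
    (fun v _ => le_max_right _ _) hFA 1 x zero_le_one hx
  have k2 := posHom_keyP hA hf hcv hcc F (fun v => max (c v) 0)
    (fun v _ => le_max_right _ _) hFA 0 x le_rfl hx
  rw [e1, k2] at k1
  -- f x = ∑ c v * f v
  have hfx : f x = ∑ v ∈ F, c v * f v := by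
    calc f x = ∑ v ∈ F, max (c v) 0 * f v - ∑ v ∈ F, max (-(c v)) 0 * f v := by
          simp only [zero_mul, one_mul, zero_add] at k1; linarith
      _ = ∑ v ∈ F, (max (c v) 0 - max (-(c v)) 0) * f v := by
          rw [← Finset.sum_sub_distrib]
          exact Finset.sum_congr rfl fun v _ => by ring
      _ = ∑ v ∈ F, c v * f v := Finset.sum_congr rfl fun v _ => by rw [← hmax (c v)]
  -- L x = ∑ c v * f v
  have hLx : L x = ∑ v ∈ F, c v * f v := by
    rw [← hc, map_sum]
    apply Finset.sum_congr rfl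
    intro v hv
    rw [_root_.map_smul, smul_eq_mul, hLb v (hFb v hv)]
  rw [hfx, hLx]

end PosHomAux

/-- For a positively 1-homogeneous function `f` and a convex set `A`, linearity on `A`,
affinity on `A`, and being simultaneously convex and concave on `A` are equivalent. -/
theorem posHom_linearOn_tfae {n : ℕ} (A : Set (Euc n)) (hA : Convex ℝ A)
    (f : Euc n → ℝ) (hf : ∀ r : ℝ, 0 ≤ r → ∀ x, f (r • x) = r * f x) :
    ((∃ w : Euc n, ∀ x ∈ A, f x = (inner ℝ x w : ℝ)) ↔
        (∃ (w : Euc n) (c : ℝ), ∀ x ∈ A, f x = (inner ℝ x w : ℝ) + c)) ∧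
    ((∃ (w : Euc n) (c : ℝ), ∀ x ∈ A, f x = (inner ℝ x w : ℝ) + c) ↔
        (ConvexOn ℝ A f ∧ ConcaveOn ℝ A f)) := by
  have hba : (∃ (w : Euc n) (c : ℝ), ∀ x ∈ A, f x = (inner ℝ x w : ℝ) + c) →
      ConvexOn ℝ A f ∧ ConcaveOn ℝ A f := by
    rintro ⟨w, c, h⟩
    have key : ∀ x ∈ A, ∀ y ∈ A, ∀ a b : ℝ, 0 ≤ a → 0 ≤ b → a + b = 1 →
        f (a • x + b • y) = a * f x + b * f y := by
      intro x hx y hy a b ha hb hab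
      rw [h _ (hA hx hy ha hb hab), h x hx, h y hy]
      have hi : (inner ℝ (a • x + b • y) w : ℝ) = a * inner ℝ x w + b * inner ℝ y w := by
        rw [inner_add_left, real_inner_smul_left, real_inner_smul_left]
      rw [hi]
      linear_combination -(c : ℝ) * hab
    exact ⟨⟨hA, fun x hx y hy a b ha hb hab => le_of_eq (key x hx y hy a b ha hb hab)⟩,
      ⟨hA, fun x hx y hy a b ha hb hab => ge_of_eq (key x hx y hy a b ha hb hab)⟩⟩
  refine ⟨⟨?_, ?_⟩, ⟨hba, ?_⟩⟩
  · rintro ⟨w, h⟩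
    exact ⟨w, 0, fun x hx => by rw [h x hx, add_zero]⟩
  · intro hb
    obtain ⟨hcv, hcc⟩ := hba hb
    exact posHom_linearOn_of_affine hA hf hcv hcc
  · rintro ⟨hcv, hcc⟩
    obtain ⟨w, hw⟩ := posHom_linearOn_of_affine hA hf hcv hcc
    exact ⟨w, 0, fun x hx => by rw [hw x hx, add_zero]⟩
end

section
/- Let μ be a probability measure with bounded support on the space of convex bodies (polytopes) in ℝⁿ, let K be the convex body with support function h_K = ∫ h_P dμ(P), and let A ⊆ ℝⁿ be convex. Then h_K is linear on A if and only if h_P is linear on A for every P ∈ supp μ. -/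
open Set MeasureTheory Metric
open scoped Pointwise

set_option synthInstance.maxHeartbeats 1000000
set_option maxHeartbeats 1000000

namespace MacroidAux

open TopologicalSpace

instance (n : ℕ) : SecondCountableTopology (ConvexBody (Euc n)) := by
  have hf : Isometry (fun K : ConvexBody (Euc n) =>
      (⟨⟨K, K.isCompact⟩, K.nonempty⟩ : TopologicalSpace.NonemptyCompacts (Euc n))) := by
    intro K L
    show EMetric.hausdorffEdist (K : Set (Euc n)) (L : Set (Euc n)) = edist K L
    exact ConvexBody.hausdorffEdist_coe (K := K) (L := L)
  exact hf.isEmbedding.secondCountableTopology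

variable {n : ℕ} {K L : Set (Euc n)} {u v : Euc n}

lemma continuous_inner_left (u : Euc n) : Continuous fun x : Euc n => (inner ℝ x u : ℝ) :=
  Continuous.inner continuous_id continuous_const

lemma bddAbove_img (hK : IsCompact K) (u : Euc n) :
    BddAbove ((fun x => (inner ℝ x u : ℝ)) '' K) :=
  (hK.image (continuous_inner_left u)).bddAbove

lemma inner_le_suppFn (hK : IsCompact K) (hx : u ∈ K) (v : Euc n) :
    (inner ℝ u v : ℝ) ≤ suppFn K v :=
  le_csSup (bddAbove_img hK v) (Set.mem_image_of_mem _ hx)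

lemma suppFn_le (hne : K.Nonempty) {c : ℝ} (h : ∀ x ∈ K, (inner ℝ x u : ℝ) ≤ c) :
    suppFn K u ≤ c :=
  csSup_le (hne.image _) (by rintro y ⟨x, hx, rfl⟩; exact h x hx)

lemma suppFn_add_le (hK : IsCompact K) (hne : K.Nonempty) (u v : Euc n) :
    suppFn K (u + v) ≤ suppFn K u + suppFn K v := by
  refine suppFn_le hne fun x hx => ?_
  rw [inner_add_right]
  exact add_le_add (inner_le_suppFn hK hx u) (inner_le_suppFn hK hx v)

lemma suppFn_smul (hK : IsCompact K) (hne : K.Nonempty) {c : ℝ} (hc : 0 ≤ c) (u : Euc n) :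
    suppFn K (c • u) = c * suppFn K u := by
  rcases hc.eq_or_lt with rfl | hc
  · simp only [zero_smul, zero_mul]
    refine le_antisymm (suppFn_le hne fun x hx => by simp) ?_
    obtain ⟨x, hx⟩ := hne
    have := inner_le_suppFn hK hx (0 : Euc n)
    simpa using this
  · refine le_antisymm (suppFn_le hne fun x hx => ?_) ?_
    · rw [real_inner_smul_right]
      exact mul_le_mul_of_nonneg_left (inner_le_suppFn hK hx u) hc.le
    · rw [← le_div_iff₀' hc]
      refine suppFn_le hne fun x hx => ?_
      rw [le_div_iff₀' hc, ← real_inner_smul_right]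
      exact inner_le_suppFn hK hx _

lemma abs_suppFn_le (hK : IsCompact K) (hne : K.Nonempty) {R : ℝ}
    (hsub : ∀ x ∈ K, ‖x‖ ≤ R) (u : Euc n) : |suppFn K u| ≤ R * ‖u‖ := by
  rw [abs_le]
  obtain ⟨x₀, hx₀⟩ := hne
  constructor
  · have h1 := inner_le_suppFn hK hx₀ u
    have h2 : |(inner ℝ x₀ u : ℝ)| ≤ R * ‖u‖ := by
      refine (abs_real_inner_le_norm x₀ u).trans ?_
      exact mul_le_mul_of_nonneg_right (hsub x₀ hx₀) (norm_nonneg u)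
    linarith [(abs_le.1 h2).1]
  · refine suppFn_le ⟨x₀, hx₀⟩ fun x hx => ?_
    refine (le_abs_self _).trans ((abs_real_inner_le_norm x u).trans ?_)
    exact mul_le_mul_of_nonneg_right (hsub x hx) (norm_nonneg u)

lemma suppFn_le_hausdorff (hK : IsCompact K) (hKne : K.Nonempty)
    (hL : IsCompact L) (hLne : L.Nonempty) (u : Euc n) :
    suppFn K u ≤ suppFn L u + hausdorffDist K L * ‖u‖ := by
  have hfin : EMetric.hausdorffEdist K L ≠ ⊤ :=
    hausdorffEdist_ne_top_of_nonempty_of_bounded hKne hLne hK.isBounded hL.isBounded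
  refine suppFn_le hKne fun x hx => ?_
  obtain ⟨y, hy, hdy⟩ := hL.exists_infDist_eq_dist hLne x
  have h1 : dist x y ≤ hausdorffDist K L := by
    rw [← hdy]; exact infDist_le_hausdorffDist_of_mem hx hfin
  have : (inner ℝ x u : ℝ) = inner ℝ y u + inner ℝ (x - y) u := by
    rw [← inner_add_left, add_sub_cancel]
  rw [this]
  refine add_le_add (inner_le_suppFn hL hy u) ?_
  refine (real_inner_le_norm _ _).trans ?_
  refine mul_le_mul_of_nonneg_right ?_ (norm_nonneg u)
  rw [← dist_eq_norm]; exact h1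

lemma lipschitz_suppFn (u : Euc n) :
    LipschitzWith ‖u‖₊ (fun P : ConvexBody (Euc n) => suppFn (P : Set (Euc n)) u) := by
  rw [lipschitzWith_iff_dist_le_mul]
  intro P Q
  rw [Real.dist_eq, ← ConvexBody.hausdorffDist_coe, abs_le]
  have h1 := suppFn_le_hausdorff P.isCompact P.nonempty Q.isCompact Q.nonempty u
  have h2 := suppFn_le_hausdorff Q.isCompact Q.nonempty P.isCompact P.nonempty u
  rw [hausdorffDist_comm] at h2
  constructor <;>
    · simp only [coe_nnnorm] at *
      nlinarith [hausdorffDist_nonneg (s := (P : Set (Euc n))) (t := (Q : Set (Euc n)))]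

lemma continuous_suppFn (u : Euc n) :
    Continuous (fun P : ConvexBody (Euc n) => suppFn (P : Set (Euc n)) u) :=
  (lipschitz_suppFn u).continuous

section Key
variable {h : Euc n → ℝ} {A : Set (Euc n)}

lemma cone_eq (hsub : ∀ x y, h (x + y) ≤ h x + h y)
    (hhom : ∀ c : ℝ, 0 ≤ c → ∀ x, h (c • x) = c * h x)
    (hmid' : ∀ a ∈ A, ∀ b ∈ A, h (a + b) = h a + h b)
    {a b : Euc n} (ha : a ∈ A) (hb : b ∈ A) {c d : ℝ} (hc : 0 ≤ c) (hd : 0 ≤ d)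
    (hcd : c ≤ d) : h (c • a + d • b) = c * h a + d * h b := by
  have hdc : (0:ℝ) ≤ d - c := by linarith
  have e1 : c • a + d • b = c • (a + b) + (d - c) • b := by module
  have e2 : d • (a + b) = (c • a + d • b) + (d - c) • a := by module
  have up : h (c • a + d • b) ≤ c * h a + d * h b := by
    rw [e1]
    calc h (c • (a + b) + (d - c) • b) ≤ h (c • (a+b)) + h ((d-c) • b) := hsub _ _
      _ = c * h (a+b) + (d-c) * h b := by rw [hhom c hc, hhom _ hdc]
      _ = c * h a + d * h b := by rw [hmid' a ha b hb]; ring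
  have lo : d * h a + d * h b ≤ h (c • a + d • b) + (d - c) * h a := by
    calc d * h a + d * h b = h (d • (a+b)) := by rw [hhom d hd, hmid' a ha b hb]; ring
      _ = h ((c • a + d • b) + (d - c) • a) := by rw [e2]
      _ ≤ h (c • a + d • b) + h ((d-c) • a) := hsub _ _
      _ = h (c • a + d • b) + (d - c) * h a := by rw [hhom _ hdc]
  linarith

lemma exists_linear_rep (hA : Convex ℝ A)
    (hsub : ∀ x y, h (x + y) ≤ h x + h y)
    (hhom : ∀ c : ℝ, 0 ≤ c → ∀ x, h (c • x) = c * h x)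
    (hmid : ∀ x ∈ A, ∀ y ∈ A, h x + h y ≤ 2 * h ((2⁻¹ : ℝ) • (x + y))) :
    ∃ w : Euc n, ∀ x ∈ A, h x = (inner ℝ x w : ℝ) := by
  rcases A.eq_empty_or_nonempty with rfl | ⟨a₀, ha₀⟩
  · exact ⟨0, fun x hx => absurd hx (Set.notMem_empty x)⟩
  have hzero : h 0 = 0 := by
    have := hhom 0 le_rfl 0; simpa using this
  have hmid' : ∀ a ∈ A, ∀ b ∈ A, h (a + b) = h a + h b := by
    intro a ha b hb
    have h1 : h ((2⁻¹:ℝ) • (a+b)) = 2⁻¹ * h (a+b) := hhom _ (by norm_num) _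
    have h2 := hmid a ha b hb
    have h3 := hsub a b
    rw [h1] at h2; linarith
  have L2 : ∀ a ∈ A, ∀ b ∈ A, ∀ c d : ℝ, 0 ≤ c → 0 ≤ d →
      h (c • a + d • b) = c * h a + d * h b := by
    intro a ha b hb c d hc hd
    rcases le_total c d with hcd | hcd
    · exact cone_eq hsub hhom hmid' ha hb hc hd hcd
    · rw [add_comm, cone_eq hsub hhom hmid' hb ha hd hc hcd]; ring
  set C : Set (Euc n) := {x | ∃ c : ℝ, 0 ≤ c ∧ ∃ a ∈ A, x = c • a} with hC
  have hmem0 : (0 : Euc n) ∈ C := ⟨0, le_rfl, a₀, ha₀, (zero_smul ℝ a₀).symm⟩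
  have hmemA : ∀ a ∈ A, a ∈ C := fun a ha => ⟨1, zero_le_one, a, ha, (one_smul ℝ a).symm⟩
  have hadd : ∀ x ∈ C, ∀ y ∈ C, (x + y) ∈ C ∧ h (x + y) = h x + h y := by
    rintro x ⟨c, hc, a, ha, rfl⟩ y ⟨d, hd, b, hb, rfl⟩
    rcases eq_or_lt_of_le (by positivity : (0:ℝ) ≤ c + d) with hcd0 | hcd0
    · have hc0 : c = 0 := by linarith
      have hd0 : d = 0 := by linarith
      subst hc0; subst hd0
      simp only [zero_smul, add_zero]
      exact ⟨hmem0, by rw [hzero]; ring⟩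
    · refine ⟨?_, ?_⟩
      · refine ⟨c + d, hcd0.le, (c/(c+d)) • a + (d/(c+d)) • b, ?_, ?_⟩
        · exact hA ha hb (by positivity) (by positivity) (by field_simp)
        · rw [smul_add, smul_smul, smul_smul]
          field_simp
      · rw [L2 a ha b hb c d hc hd, hhom c hc, hhom d hd]
  have hsum : ∀ {ι : Type} (s : Finset ι) (g : ι → Euc n), (∀ i ∈ s, g i ∈ C) →
      (∑ i ∈ s, g i) ∈ C ∧ h (∑ i ∈ s, g i) = ∑ i ∈ s, h (g i) := by
    intro ι s g hg
    classical
    induction s using Finset.cons_induction with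
    | empty => simpa using ⟨hmem0, hzero⟩
    | cons j s hj ih =>
      have hgj : g j ∈ C := hg j (Finset.mem_cons_self j s)
      have ih' := ih fun i hi => hg i (Finset.mem_cons_of_mem hi)
      rw [Finset.sum_cons, Finset.sum_cons]
      exact ⟨(hadd _ hgj _ ih'.1).1, by rw [(hadd _ hgj _ ih'.1).2, ih'.2]⟩
  obtain ⟨bs, hbsA, hspan, hli⟩ := exists_linearIndependent ℝ A
  set W : Submodule ℝ (Euc n) := Submodule.span ℝ A with hW
  have hre : Submodule.span ℝ (Set.range (Subtype.val : bs → Euc n)) = W := by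
    rw [Subtype.range_coe]; exact hspan
  let B : Module.Basis bs ℝ W := (Module.Basis.span hli).map (LinearEquiv.ofEq _ _ hre)
  have hB : ∀ i : bs, (B i : Euc n) = (i : Euc n) := by
    intro i
    simp only [B, Module.Basis.map_apply]
    rw [show ((LinearEquiv.ofEq _ _ hre) ((Module.Basis.span hli) i) : Euc n)
        = ((Module.Basis.span hli) i : Euc n) from rfl, Module.Basis.span_apply]
  let φ : W →ₗ[ℝ] ℝ := B.constr ℝ (fun i => h (i : Euc n))
  let f : Euc n →ₗ[ℝ] ℝ := φ ∘ₗ W.orthogonalProjectionOnto.toLinearMap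
  refine ⟨(InnerProductSpace.toDual ℝ (Euc n)).symm (LinearMap.toContinuousLinearMap f),
    fun a haA => ?_⟩
  have haW : a ∈ W := Submodule.subset_span haA
  rw [real_inner_comm, InnerProductSpace.toDual_symm_apply]
  show h a = f a
  have hproj : W.orthogonalProjectionOnto a = ⟨a, haW⟩ :=
    Submodule.orthogonalProjectionOnto_mem_subspace_eq_self (⟨a, haW⟩ : W)
  have hfa : f a = φ ⟨a, haW⟩ := by
    simp only [f, LinearMap.comp_apply, ContinuousLinearMap.coe_coe, hproj]
  rw [hfa]
  classical
  set r : bs →₀ ℝ := B.repr ⟨a, haW⟩ with hr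
  have hrep : (⟨a, haW⟩ : W) = ∑ i ∈ r.support, r i • B i := by
    conv_lhs => rw [← B.linearCombination_repr ⟨a, haW⟩]
    rw [Finsupp.linearCombination_apply, Finsupp.sum]
  have ha_eq : a = ∑ i ∈ r.support, r i • (i : Euc n) := by
    have := congrArg (Subtype.val : W → Euc n) hrep
    simpa [hB] using this
  have hφ : φ ⟨a, haW⟩ = ∑ i ∈ r.support, r i * h (i : Euc n) := by
    rw [show φ ⟨a, haW⟩ = (B.repr ⟨a, haW⟩).sum fun i c => c • h (i : Euc n) from
      Module.Basis.constr_apply ..]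
    rw [← hr, Finsupp.sum]
    simp [smul_eq_mul]
  rw [hφ]
  set s := r.support with hs
  set P := s.filter (fun i => 0 ≤ r i) with hP
  set N := s.filter (fun i => ¬ 0 ≤ r i) with hN
  have hvec : a + ∑ i ∈ N, (-(r i)) • (i : Euc n) = ∑ i ∈ P, r i • (i : Euc n) := by
    have hsplit : ∑ i ∈ P, r i • (i : Euc n) + ∑ i ∈ N, r i • (i : Euc n)
        = ∑ i ∈ s, r i • (i : Euc n) :=
      Finset.sum_filter_add_sum_filter_not s _ _
    have h0 : (∑ i ∈ N, r i • (i : Euc n)) + ∑ i ∈ N, (-(r i)) • (i : Euc n) = 0 := by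
      rw [← Finset.sum_add_distrib]
      exact Finset.sum_eq_zero fun i _ => by rw [← add_smul]; simp
    rw [ha_eq, ← hsplit, add_assoc, h0, add_zero]
  have hmemN : ∀ i ∈ N, (-(r i)) • (i : Euc n) ∈ C := by
    intro i hi
    have : ¬ 0 ≤ r i := (Finset.mem_filter.1 hi).2
    exact ⟨-(r i), by linarith [not_le.1 this], i, hbsA i.2, rfl⟩
  have hmemP : ∀ i ∈ P, r i • (i : Euc n) ∈ C := by
    intro i hi
    exact ⟨r i, (Finset.mem_filter.1 hi).2, i, hbsA i.2, rfl⟩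
  obtain ⟨hNC, hNh⟩ := hsum N _ hmemN
  obtain ⟨hPC, hPh⟩ := hsum P _ hmemP
  have hkey : h a + h (∑ i ∈ N, (-(r i)) • (i : Euc n)) = h (∑ i ∈ P, r i • (i : Euc n)) := by
    rw [← (hadd a (hmemA a haA) _ hNC).2, hvec]
  rw [hNh, hPh] at hkey
  have e1 : ∑ i ∈ N, h ((-(r i)) • (i : Euc n)) = -∑ i ∈ N, r i * h (i : Euc n) := by
    rw [← Finset.sum_neg_distrib]
    refine Finset.sum_congr rfl fun i hi => ?_
    have : ¬ 0 ≤ r i := (Finset.mem_filter.1 hi).2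
    rw [hhom _ (by linarith [not_le.1 this]) _]; ring
  have e2 : ∑ i ∈ P, h (r i • (i : Euc n)) = ∑ i ∈ P, r i * h (i : Euc n) := by
    refine Finset.sum_congr rfl fun i hi => ?_
    exact hhom _ (Finset.mem_filter.1 hi).2 _
  have hsplit2 : ∑ i ∈ P, r i * h (i : Euc n) + ∑ i ∈ N, r i * h (i : Euc n)
      = ∑ i ∈ s, r i * h (i : Euc n) :=
    Finset.sum_filter_add_sum_filter_not s _ _
  rw [e1, e2] at hkey
  linarith

end Key

lemma measSupport_subset_of_closed {α : Type*} [TopologicalSpace α] [MeasurableSpace α]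
    {μ : Measure α} {F : Set α} (hF : IsClosed F) (hnull : μ Fᶜ = 0) :
    measSupport μ ⊆ F := by
  intro x hx
  by_contra hxF
  have := hx Fᶜ hF.isOpen_compl hxF
  rw [hnull] at this; exact lt_irrefl 0 this

lemma compl_measSupport_null {α : Type*} [TopologicalSpace α] [MeasurableSpace α]
    [SecondCountableTopology α] [OpensMeasurableSpace α] (μ : Measure α) :
    μ (measSupport μ)ᶜ = 0 := by
  set O : Set (Set α) := {U | IsOpen U ∧ μ U = 0} with hO
  have hcompl : (measSupport μ)ᶜ = ⋃₀ O := by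
    ext x
    simp only [Set.mem_compl_iff, measSupport, Set.mem_setOf_eq, not_forall]
    constructor
    · rintro ⟨U, hU, hxU, hpos⟩
      exact ⟨U, ⟨hU, le_antisymm (not_lt.1 hpos) zero_le⟩, hxU⟩
    · rintro ⟨U, ⟨hU, hU0⟩, hxU⟩
      exact ⟨U, hU, hxU, by rw [hU0]; exact lt_irrefl 0⟩
  obtain ⟨T, hTO, hTc, hTeq⟩ := TopologicalSpace.isOpen_sUnion_countable O (fun U hU => hU.1)
  rw [hcompl, ← hTeq]
  exact (measure_sUnion_null_iff hTO).2 fun U hU => (hTc hU).2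

end MacroidAux

/-- For a macroid `K` with generating measure `μ`, the support function of `K` is linear on a
convex set `A` iff the support function of every body in the support of `μ` is linear on `A`. -/
theorem macroid_suppFn_linearOn_iff {n : ℕ}
    [MeasurableSpace (ConvexBody (Euc n))] [BorelSpace (ConvexBody (Euc n))]
    (μ : Measure (ConvexBody (Euc n))) [IsProbabilityMeasure μ]
    (hbdd : Bornology.IsBounded (measSupport μ))
    (K : Set (Euc n)) (hKconv : Convex ℝ K) (hKcomp : IsCompact K) (hKne : K.Nonempty)
    (hgen : ∀ x : Euc n, suppFn K x = ∫ P, suppFn (P : Set (Euc n)) x ∂μ)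
    (A : Set (Euc n)) (hA : Convex ℝ A) :
    LinearOn (suppFn K) A ↔ ∀ P ∈ measSupport μ, LinearOn (suppFn (P : Set (Euc n))) A := by
  classical
  have hconull : μ (measSupport μ)ᶜ = 0 := MacroidAux.compl_measSupport_null μ
  have hae_supp : ∀ᵐ P ∂μ, P ∈ measSupport μ := by
    rw [ae_iff]
    convert hconull using 2
    rfl
  obtain ⟨R, hR⟩ : ∃ R : ℝ, ∀ P ∈ measSupport μ, ∀ x ∈ (P : Set (Euc n)), ‖x‖ ≤ R := by
    rcases (measSupport μ).eq_empty_or_nonempty with he | ⟨P₀, hP₀⟩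
    · exact ⟨0, fun P hP => by rw [he] at hP; exact absurd hP (Set.notMem_empty P)⟩
    · obtain ⟨r, hr⟩ := hbdd.subset_closedBall P₀
      obtain ⟨R₀, hR₀⟩ := (P₀.isCompact.isBounded).subset_closedBall 0
      refine ⟨r + R₀, fun P hP x hx => ?_⟩
      have hdist : hausdorffDist (P : Set (Euc n)) (P₀ : Set (Euc n)) ≤ r := by
        rw [ConvexBody.hausdorffDist_coe]
        exact mem_closedBall.1 (hr hP)
      have hfin : EMetric.hausdorffEdist (P : Set (Euc n)) (P₀ : Set (Euc n)) ≠ ⊤ :=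
        ConvexBody.hausdorffEdist_ne_top
      obtain ⟨y, hy, hdy⟩ := P₀.isCompact.exists_infDist_eq_dist P₀.nonempty x
      have h1 : dist x y ≤ r := by
        rw [← hdy]; exact (infDist_le_hausdorffDist_of_mem hx hfin).trans hdist
      have h2 : ‖y‖ ≤ R₀ := by
        have := hR₀ hy; rwa [mem_closedBall, dist_zero_right] at this
      calc ‖x‖ = ‖(x - y) + y‖ := by rw [sub_add_cancel]
        _ ≤ ‖x - y‖ + ‖y‖ := norm_add_le _ _
        _ ≤ r + R₀ := add_le_add (by rwa [← dist_eq_norm]) h2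
  have hint : ∀ u : Euc n,
      Integrable (fun P : ConvexBody (Euc n) => suppFn (P : Set (Euc n)) u) μ := by
    intro u
    refine Integrable.mono' (integrable_const (|R| * ‖u‖))
      (MacroidAux.continuous_suppFn u).aestronglyMeasurable ?_
    filter_upwards [hae_supp] with P hP
    rw [Real.norm_eq_abs]
    exact MacroidAux.abs_suppFn_le P.isCompact P.nonempty
      (fun x hx => (hR P hP x hx).trans (le_abs_self R)) u
  have hI : ∀ x y : Euc n,
      ∫ P, (suppFn (P : Set (Euc n)) x + suppFn (P : Set (Euc n)) y
        - 2 * suppFn (P : Set (Euc n)) ((2⁻¹ : ℝ) • (x + y))) ∂μ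
      = suppFn K x + suppFn K y - 2 * suppFn K ((2⁻¹ : ℝ) • (x + y)) := by
    intro x y
    have h1 : Integrable (fun P : ConvexBody (Euc n) =>
        suppFn (P : Set (Euc n)) x + suppFn (P : Set (Euc n)) y) μ := (hint x).add (hint y)
    have h2 : Integrable (fun P : ConvexBody (Euc n) =>
        2 * suppFn (P : Set (Euc n)) ((2⁻¹ : ℝ) • (x + y))) μ := (hint _).const_mul 2
    rw [integral_sub h1 h2, integral_add (hint x) (hint y), integral_const_mul,
      ← hgen, ← hgen, ← hgen]
  have hg0 : ∀ (x y : Euc n) (Q : ConvexBody (Euc n)),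
      0 ≤ suppFn (Q : Set (Euc n)) x + suppFn (Q : Set (Euc n)) y
        - 2 * suppFn (Q : Set (Euc n)) ((2⁻¹ : ℝ) • (x + y)) := by
    intro x y Q
    have h1 : suppFn (Q : Set (Euc n)) ((2 : ℝ) • ((2⁻¹ : ℝ) • (x + y)))
        = 2 * suppFn (Q : Set (Euc n)) ((2⁻¹ : ℝ) • (x + y)) :=
      MacroidAux.suppFn_smul Q.isCompact Q.nonempty (by norm_num) _
    have h2 : ((2 : ℝ) • ((2⁻¹ : ℝ) • (x + y))) = x + y := by
      rw [smul_smul]; norm_num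
    have h3 := MacroidAux.suppFn_add_le Q.isCompact Q.nonempty x y
    rw [h2] at h1; linarith
  have hmemA : ∀ x ∈ A, ∀ y ∈ A, ((2⁻¹ : ℝ) • (x + y)) ∈ A := by
    intro x hx y hy
    have := hA hx hy (by norm_num : (0:ℝ) ≤ 2⁻¹) (by norm_num : (0:ℝ) ≤ 2⁻¹)
      (by norm_num : (2⁻¹:ℝ) + 2⁻¹ = 1)
    rwa [smul_add]
  constructor
  · rintro ⟨w, hw⟩ P hP
    refine MacroidAux.exists_linear_rep hA (MacroidAux.suppFn_add_le P.isCompact P.nonempty)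
      (fun c hc u => MacroidAux.suppFn_smul P.isCompact P.nonempty hc u) ?_
    intro x hx y hy
    set g : ConvexBody (Euc n) → ℝ := fun Q => suppFn (Q : Set (Euc n)) x
      + suppFn (Q : Set (Euc n)) y
      - 2 * suppFn (Q : Set (Euc n)) ((2⁻¹ : ℝ) • (x + y)) with hgdef
    have hgint : Integrable g μ := by
      have h1 : Integrable (fun P : ConvexBody (Euc n) =>
          suppFn (P : Set (Euc n)) x + suppFn (P : Set (Euc n)) y) μ := (hint x).add (hint y)
      have h2 : Integrable (fun P : ConvexBody (Euc n) =>
          2 * suppFn (P : Set (Euc n)) ((2⁻¹ : ℝ) • (x + y))) μ := (hint _).const_mul 2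
      exact h1.sub h2
    have hI0 : ∫ Q, g Q ∂μ = 0 := by
      rw [hgdef, hI x y, hw x hx, hw y hy, hw _ (hmemA x hx y hy),
        real_inner_smul_left, inner_add_left]
      ring
    have hae0 : g =ᵐ[μ] 0 :=
      (integral_eq_zero_iff_of_nonneg (fun Q => hg0 x y Q) hgint).1 hI0
    have hgcont : Continuous g := by
      exact ((MacroidAux.continuous_suppFn x).add (MacroidAux.continuous_suppFn y)).sub
        (continuous_const.mul (MacroidAux.continuous_suppFn _))
    have hclosed : IsClosed {Q : ConvexBody (Euc n) | g Q = 0} :=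
      isClosed_eq hgcont continuous_const
    have hnull : μ {Q : ConvexBody (Euc n) | g Q = 0}ᶜ = 0 := by
      have h := hae0
      rw [Filter.EventuallyEq, ae_iff] at h
      convert h using 2
      rfl
    have hPF : g P = 0 := MacroidAux.measSupport_subset_of_closed hclosed hnull hP
    rw [hgdef] at hPF
    simp only at hPF
    linarith
  · intro hall
    refine MacroidAux.exists_linear_rep hA (MacroidAux.suppFn_add_le hKcomp hKne)
      (fun c hc u => MacroidAux.suppFn_smul hKcomp hKne hc u) ?_
    intro x hx y hy
    set g : ConvexBody (Euc n) → ℝ := fun Q => suppFn (Q : Set (Euc n)) x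
      + suppFn (Q : Set (Euc n)) y
      - 2 * suppFn (Q : Set (Euc n)) ((2⁻¹ : ℝ) • (x + y)) with hgdef
    have hae0 : g =ᵐ[μ] 0 := by
      filter_upwards [hae_supp] with P hP
      obtain ⟨w, hw⟩ := hall P hP
      show suppFn (P : Set (Euc n)) x + suppFn (P : Set (Euc n)) y
        - 2 * suppFn (P : Set (Euc n)) ((2⁻¹ : ℝ) • (x + y)) = 0
      rw [hw x hx, hw y hy, hw _ (hmemA x hx y hy), real_inner_smul_left, inner_add_left]
      ring
    have hI0 : ∫ Q, g Q ∂μ = 0 := by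
      rw [integral_congr_ae hae0]; simp
    rw [hgdef, hI x y] at hI0
    linarith
end

section
/- Let K be a macroid with generating measure μ. If K is not smooth, then no body L ∈ supp μ is smooth. -/
open Set MeasureTheory Metric
open scoped Pointwise

section Helpers

open scoped InnerProductSpace

variable {n : ℕ}

lemma suppFn_bddAbove {K : Set (Euc n)} (hc : IsCompact K) (u : Euc n) :
    BddAbove ((fun x => (inner ℝ x u : ℝ)) '' K) :=
  (hc.image (continuous_id.inner continuous_const)).bddAbove

lemma inner_le_suppFn {K : Set (Euc n)} (hc : IsCompact K) {x : Euc n} (hx : x ∈ K)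
    (u : Euc n) : (inner ℝ x u : ℝ) ≤ suppFn K u :=
  le_csSup (suppFn_bddAbove hc u) ⟨x, hx, rfl⟩

lemma suppFn_le {K : Set (Euc n)} (hne : K.Nonempty) {u : Euc n} {B : ℝ}
    (h : ∀ x ∈ K, (inner ℝ x u : ℝ) ≤ B) : suppFn K u ≤ B :=
  csSup_le (hne.image _) (by rintro t ⟨x, hx, rfl⟩; exact h x hx)

lemma suppFn_add_le {K : Set (Euc n)} (hc : IsCompact K) (hne : K.Nonempty) (u v : Euc n) :
    suppFn K (u + v) ≤ suppFn K u + suppFn K v := by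
  refine suppFn_le hne fun x hx => ?_
  rw [inner_add_right]
  exact add_le_add (inner_le_suppFn hc hx u) (inner_le_suppFn hc hx v)

lemma suppFn_smul {K : Set (Euc n)} (hc : IsCompact K) (hne : K.Nonempty) {r : ℝ}
    (hr : 0 ≤ r) (u : Euc n) : suppFn K (r • u) = r * suppFn K u := by
  rcases eq_or_lt_of_le hr with rfl | hr
  · have h0 : suppFn K ((0:ℝ) • u) = 0 := by
      refine le_antisymm (suppFn_le hne fun x hx => by simp) ?_
      obtain ⟨x, hx⟩ := hne
      simpa using inner_le_suppFn hc hx ((0:ℝ) • u)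
    rw [h0, zero_mul]
  · refine le_antisymm ?_ ?_
    · refine suppFn_le hne fun x hx => ?_
      rw [real_inner_smul_right]
      exact mul_le_mul_of_nonneg_left (inner_le_suppFn hc hx u) hr.le
    · have h1 : suppFn K u ≤ r⁻¹ * suppFn K (r • u) := by
        refine suppFn_le hne fun x hx => ?_
        have h2 : (inner ℝ x (r • u) : ℝ) ≤ suppFn K (r • u) := inner_le_suppFn hc hx _
        rw [real_inner_smul_right] at h2
        have h3 : (inner ℝ x u : ℝ) = r⁻¹ * (r * inner ℝ x u) := by field_simp
        rw [h3]
        exact mul_le_mul_of_nonneg_left h2 (inv_nonneg.2 hr.le)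
      calc r * suppFn K u ≤ r * (r⁻¹ * suppFn K (r • u)) :=
            mul_le_mul_of_nonneg_left h1 hr.le
        _ = suppFn K (r • u) := by field_simp

lemma abs_suppFn_le {K : Set (Euc n)} (hc : IsCompact K) (hne : K.Nonempty) {R : ℝ}
    (hK : K ⊆ closedBall 0 R) (u : Euc n) : |suppFn K u| ≤ R * ‖u‖ := by
  have hnorm : ∀ x ∈ K, ‖x‖ ≤ R := by
    intro x hx
    simpa [mem_closedBall, dist_zero_right] using hK hx
  rw [abs_le]
  constructor
  · obtain ⟨x, hx⟩ := hne
    have h1 : -(R * ‖u‖) ≤ (inner ℝ x u : ℝ) := by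
      have h2 := abs_real_inner_le_norm x u
      have h3 : ‖x‖ * ‖u‖ ≤ R * ‖u‖ :=
        mul_le_mul_of_nonneg_right (hnorm x hx) (norm_nonneg u)
      rw [abs_le] at h2
      linarith
    exact h1.trans (inner_le_suppFn hc hx u)
  · refine suppFn_le hne fun x hx => ?_
    exact (real_inner_le_norm x u).trans
      (mul_le_mul_of_nonneg_right (hnorm x hx) (norm_nonneg u))

lemma suppFn_le_hausdorff {P Q : Set (Euc n)} (hQc : IsCompact Q) (hPne : P.Nonempty)
    (hQne : Q.Nonempty) (hfin : EMetric.hausdorffEdist P Q ≠ ⊤) (u : Euc n) :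
    suppFn P u ≤ suppFn Q u + hausdorffDist P Q * ‖u‖ := by
  refine suppFn_le hPne fun x hx => ?_
  obtain ⟨y, hy, hxy⟩ := hQc.exists_infDist_eq_dist hQne x
  have h1 : dist x y ≤ hausdorffDist P Q := by
    rw [← hxy]; exact infDist_le_hausdorffDist_of_mem hx hfin
  have h2 : (inner ℝ x u : ℝ) = inner ℝ y u + inner ℝ (x - y) u := by
    rw [inner_sub_left]; ring
  have h3 : (inner ℝ (x - y) u : ℝ) ≤ hausdorffDist P Q * ‖u‖ := by
    refine (real_inner_le_norm _ _).trans ?_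
    refine mul_le_mul_of_nonneg_right ?_ (norm_nonneg u)
    rw [← dist_eq_norm]; exact h1
  have h4 := inner_le_suppFn hQc hy u
  linarith [h2, h3, h4]

lemma continuous_suppFn_body (u : Euc n) :
    Continuous fun P : ConvexBody (Euc n) => suppFn (P : Set (Euc n)) u := by
  refine LipschitzWith.continuous (K := ‖u‖₊) (LipschitzWith.of_dist_le_mul fun P Q => ?_)
  have h1 := suppFn_le_hausdorff Q.isCompact P.nonempty Q.nonempty
    (ConvexBody.hausdorffEdist_ne_top) u
  have h2 := suppFn_le_hausdorff P.isCompact Q.nonempty P.nonempty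
    (ConvexBody.hausdorffEdist_ne_top) u
  have hcomm : hausdorffDist (Q : Set (Euc n)) (P : Set (Euc n))
      = hausdorffDist (P : Set (Euc n)) (Q : Set (Euc n)) := hausdorffDist_comm
  rw [hcomm] at h2
  have hd : dist P Q = hausdorffDist (P : Set (Euc n)) (Q : Set (Euc n)) := rfl
  rw [Real.dist_eq, abs_le]
  constructor <;> [skip; skip] <;>
    · rw [hd]
      push_cast
      nlinarith [h1, h2]

instance secondCountable_convexBody : SecondCountableTopology (ConvexBody (Euc n)) := by
  let f : ConvexBody (Euc n) → TopologicalSpace.NonemptyCompacts (Euc n) :=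
    fun K => ⟨⟨K, K.isCompact⟩, K.nonempty⟩
  have hf : Isometry f := Isometry.of_dist_eq fun K L => by
    rw [Metric.NonemptyCompacts.dist_eq]
    rfl
  exact hf.isEmbedding.secondCountableTopology

lemma compl_measSupport_null {α : Type*} [TopologicalSpace α] [SecondCountableTopology α]
    [MeasurableSpace α] (μ : Measure α) : μ (measSupport μ)ᶜ = 0 := by
  obtain ⟨T, hTc, hTsub, hTeq⟩ := TopologicalSpace.isOpen_sUnion_countable
    {U : Set α | IsOpen U ∧ μ U = 0} (fun s hs => hs.1)
  have hcompl : (measSupport μ)ᶜ = ⋃₀ {U : Set α | IsOpen U ∧ μ U = 0} := by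
    ext x
    simp only [mem_compl_iff, measSupport, mem_setOf_eq, not_forall, mem_sUnion]
    constructor
    · rintro ⟨U, hU, hxU, hpos⟩
      exact ⟨U, ⟨hU, by simpa using hpos⟩, hxU⟩
    · rintro ⟨U, ⟨hU, hU0⟩, hxU⟩
      exact ⟨U, hU, hxU, by simp [hU0]⟩
  rw [hcompl, ← hTeq]
  exact (measure_sUnion_null_iff hTc).2 fun s hs => (hTsub hs).2

end Helpers

/-- A convex body fails to be smooth iff its support function is linear on some convex cone of
dimension at least 2. -/
def NonSmoothBody {n : ℕ} (K : Set (Euc n)) : Prop :=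
  ∃ C : Set (Euc n), Convex ℝ C ∧ (∀ r : ℝ, 0 ≤ r → r • C ⊆ C) ∧
    2 ≤ Module.finrank ℝ (Submodule.span ℝ C : Submodule ℝ (Euc n)) ∧
    LinearOn (suppFn K) C

/-- If a macroid is not smooth, then no body in the support of its generating measure is
smooth. -/
theorem macroid_nonSmooth {n : ℕ}
    [MeasurableSpace (ConvexBody (Euc n))] [BorelSpace (ConvexBody (Euc n))]
    (μ : Measure (ConvexBody (Euc n))) [IsProbabilityMeasure μ]
    (hbdd : Bornology.IsBounded (measSupport μ))
    (K : Set (Euc n)) (hKconv : Convex ℝ K) (hKcomp : IsCompact K) (hKne : K.Nonempty)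
    (hgen : ∀ x : Euc n, suppFn K x = ∫ P, suppFn (P : Set (Euc n)) x ∂μ)
    (hns : NonSmoothBody K) :
    ∀ L ∈ measSupport μ, NonSmoothBody (L : Set (Euc n)) := by
  obtain ⟨C, hCconv, hCcone, hCrank, w, hw⟩ := hns
  -- basic facts about the cone C
  have hCne : C.Nonempty := by
    rcases C.eq_empty_or_nonempty with h | h
    · exfalso
      rw [h, Submodule.span_empty] at hCrank
      simp at hCrank
    · exact h
  have hsmulC : ∀ r : ℝ, 0 ≤ r → ∀ x ∈ C, r • x ∈ C := fun r hr x hx =>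
    hCcone r hr (Set.smul_mem_smul_set hx)
  have h0C : (0 : Euc n) ∈ C := by
    obtain ⟨c, hc⟩ := hCne
    simpa using hsmulC 0 le_rfl c hc
  have haddC : ∀ x y : Euc n, x ∈ C → y ∈ C → x + y ∈ C := by
    intro x y hx hy
    have hmid : (1/2 : ℝ) • x + (1/2 : ℝ) • y ∈ C :=
      hCconv hx hy (by norm_num) (by norm_num) (by norm_num)
    have h2 := hsmulC 2 (by norm_num) _ hmid
    have : (2:ℝ) • ((1/2 : ℝ) • x + (1/2 : ℝ) • y) = x + y := by
      rw [smul_add, smul_smul, smul_smul]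
      norm_num
    rwa [this] at h2
  -- uniform bound on bodies in the support
  obtain ⟨R, hRS⟩ : ∃ R : ℝ, ∀ P ∈ measSupport μ, (P : Set (Euc n)) ⊆ closedBall 0 R := by
    rcases (measSupport μ).eq_empty_or_nonempty with he | ⟨L0, hL0⟩
    · exact ⟨0, by simp [he]⟩
    · obtain ⟨D, hD⟩ := Metric.isBounded_iff.1 hbdd
      obtain ⟨R0, hR0⟩ := L0.isBounded.subset_closedBall 0
      refine ⟨max R0 0 + max D 0, ?_⟩
      intro P hP x hx
      have hd : hausdorffDist (P : Set (Euc n)) (L0 : Set (Euc n)) ≤ D := hD hP hL0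
      obtain ⟨y, hy, hxy⟩ := L0.isCompact.exists_infDist_eq_dist L0.nonempty x
      have h1 : dist x y ≤ D := by
        rw [← hxy]
        exact (infDist_le_hausdorffDist_of_mem hx ConvexBody.hausdorffEdist_ne_top).trans hd
      have h2 : dist y 0 ≤ R0 := by simpa [mem_closedBall] using hR0 hy
      have h3 := dist_triangle x y 0
      rw [mem_closedBall]
      have := le_max_left D 0
      have := le_max_left R0 0
      linarith
  have hnull : μ (measSupport μ)ᶜ = 0 := compl_measSupport_null μ
  have hae : ∀ᵐ P ∂μ, P ∈ measSupport μ := by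
    rw [MeasureTheory.ae_iff]
    exact hnull
  -- integrability of support functions
  have hint : ∀ u : Euc n,
      Integrable (fun P : ConvexBody (Euc n) => suppFn (P : Set (Euc n)) u) μ := by
    intro u
    haveI : IsFiniteMeasure μ := inferInstance
    have hconst : Integrable (fun _ : ConvexBody (Euc n) => R * ‖u‖) μ :=
      integrable_const _
    refine hconst.mono'
      ((continuous_suppFn_body u).measurable.aestronglyMeasurable) ?_
    filter_upwards [hae] with P hP
    rw [Real.norm_eq_abs]
    exact abs_suppFn_le P.isCompact P.nonempty (hRS P hP) u
  intro L hL
  -- additivity of the support function of L on C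
  have hadd : ∀ x ∈ C, ∀ y ∈ C,
      suppFn (L : Set (Euc n)) (x + y)
        = suppFn (L : Set (Euc n)) x + suppFn (L : Set (Euc n)) y := by
    intro x hx y hy
    set g : ConvexBody (Euc n) → ℝ := fun P =>
      suppFn (P : Set (Euc n)) x + suppFn (P : Set (Euc n)) y
        - suppFn (P : Set (Euc n)) (x + y) with hg
    have hgnn : 0 ≤ g := fun P =>
      sub_nonneg.2 (suppFn_add_le P.isCompact P.nonempty x y)
    have hgint : Integrable g μ := ((hint x).add (hint y)).sub (hint (x + y))
    have hadd1 : ∫ P, (suppFn (P : Set (Euc n)) x + suppFn (P : Set (Euc n)) y) ∂μ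
        = (∫ P, suppFn (P : Set (Euc n)) x ∂μ) + ∫ P, suppFn (P : Set (Euc n)) y ∂μ :=
      integral_add (hint x) (hint y)
    have hsub1 : ∫ P, g P ∂μ
        = (∫ P, (suppFn (P : Set (Euc n)) x + suppFn (P : Set (Euc n)) y) ∂μ)
          - ∫ P, suppFn (P : Set (Euc n)) (x + y) ∂μ :=
      integral_sub ((hint x).add (hint y)) (hint (x + y))
    have hgzero : ∫ P, g P ∂μ = 0 := by
      rw [hsub1, hadd1, ← hgen, ← hgen, ← hgen,
        hw x hx, hw y hy, hw (x + y) (haddC x y hx hy), inner_add_left]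
      ring
    have hae0 : g =ᵐ[μ] 0 := (integral_eq_zero_iff_of_nonneg hgnn hgint).1 hgzero
    have hgc : Continuous g := by
      rw [hg]
      exact ((continuous_suppFn_body x).add (continuous_suppFn_body y)).sub
        (continuous_suppFn_body (x + y))
    have hopen : IsOpen {P : ConvexBody (Euc n) | g P ≠ 0} :=
      isOpen_ne_fun hgc continuous_const
    have hμ0 : μ {P : ConvexBody (Euc n) | g P ≠ 0} = 0 := by
      have h := hae0
      rw [Filter.EventuallyEq, MeasureTheory.ae_iff] at h
      simpa using h
    have hgL : g L = 0 := by
      by_contra hne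
      have hpos := hL _ hopen hne
      rw [hμ0] at hpos
      exact lt_irrefl 0 hpos
    rw [hg] at hgL
    simp only at hgL
    linarith
  -- a spanning finite subset of C and the interior-like point u0
  obtain ⟨b, hbC, hbspan, hbli⟩ := exists_linearIndependent ℝ C
  have hbfin : b.Finite := hbli.setFinite
  set t : Finset (Euc n) := hbfin.toFinset with ht
  have htC : ∀ v ∈ t, v ∈ C := fun v hv => hbC (hbfin.mem_toFinset.1 hv)
  have htspan : Submodule.span ℝ (↑t : Set (Euc n)) = Submodule.span ℝ C := by
    rw [ht, hbfin.coe_toFinset, hbspan]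
  have hmemsum : ∀ c : Euc n → ℝ, (∀ v ∈ t, 0 ≤ c v) → (∑ v ∈ t, c v • v) ∈ C := by
    intro c hc
    refine Finset.sum_induction _ (· ∈ C) (fun a b ha hb => haddC a b ha hb) h0C ?_
    intro v hv
    exact hsmulC _ (hc v hv) _ (htC v hv)
  set u0 : Euc n := ∑ v ∈ t, v with hu0
  have hu0C : u0 ∈ C := by
    have := hmemsum (fun _ => 1) (fun _ _ => zero_le_one)
    simpa [hu0] using this
  -- maximizer of ⟨·, u0⟩ on L
  obtain ⟨z, hzL, hz⟩ := L.isCompact.exists_isMaxOn L.nonempty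
    ((continuous_id.inner continuous_const).continuousOn :
      ContinuousOn (fun x : Euc n => (inner ℝ x u0 : ℝ)) _)
  have hzmax : suppFn (L : Set (Euc n)) u0 = inner ℝ z u0 :=
    le_antisymm (suppFn_le L.nonempty fun x hx => hz hx)
      (inner_le_suppFn L.isCompact hzL u0)
  refine ⟨C, hCconv, hCcone, hCrank, z, ?_⟩
  intro v hv
  have hvspan : v ∈ Submodule.span ℝ (↑t : Set (Euc n)) :=
    htspan ▸ Submodule.subset_span hv
  obtain ⟨c, -, hc⟩ := Submodule.mem_span_finset.1 hvspan
  set ε : ℝ := (1 + ∑ i ∈ t, |c i|)⁻¹ with hε'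
  have hsum_nn : 0 ≤ ∑ i ∈ t, |c i| := Finset.sum_nonneg fun i _ => abs_nonneg _
  have hε : 0 < ε := by
    rw [hε']
    positivity
  have hcoef : ∀ i ∈ t, 0 ≤ 1 - ε * c i := by
    intro i hi
    have h1 : c i ≤ |c i| := le_abs_self _
    have h2 : |c i| ≤ ∑ j ∈ t, |c j| :=
      Finset.single_le_sum (f := fun j => |c j|) (fun j _ => abs_nonneg _) hi
    have h3 : ε * c i ≤ ε * (∑ j ∈ t, |c j|) :=
      mul_le_mul_of_nonneg_left (h1.trans h2) hε.le
    have h4 : ε * (1 + ∑ j ∈ t, |c j|) = 1 := by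
      rw [hε']
      field_simp
    nlinarith [hε]
  have hrep : u0 - ε • v = ∑ i ∈ t, (1 - ε * c i) • i := by
    rw [hu0, ← hc, Finset.smul_sum, ← Finset.sum_sub_distrib]
    refine Finset.sum_congr rfl fun i _ => ?_
    rw [smul_smul, sub_smul, one_smul]
  have hsubC : u0 - ε • v ∈ C := by
    rw [hrep]
    exact hmemsum _ hcoef
  have hεvC : ε • v ∈ C := hsmulC ε hε.le v hv
  have hsplit : suppFn (L : Set (Euc n)) u0
      = suppFn (L : Set (Euc n)) (u0 - ε • v) + suppFn (L : Set (Euc n)) (ε • v) := by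
    have h := hadd _ hsubC _ hεvC
    rwa [sub_add_cancel] at h
  have h5 : suppFn (L : Set (Euc n)) (ε • v) = ε * suppFn (L : Set (Euc n)) v :=
    suppFn_smul L.isCompact L.nonempty hε.le v
  have h6 : (inner ℝ z (u0 - ε • v) : ℝ) ≤ suppFn (L : Set (Euc n)) (u0 - ε • v) :=
    inner_le_suppFn L.isCompact hzL _
  have h8 : (inner ℝ z (u0 - ε • v) : ℝ) = inner ℝ z u0 - ε * inner ℝ z v := by
    rw [inner_sub_right, real_inner_smul_right]
  have h7 : suppFn (L : Set (Euc n)) v ≤ inner ℝ z v := by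
    have h9 : ε * suppFn (L : Set (Euc n)) v ≤ ε * inner ℝ z v := by
      rw [h8] at h6
      rw [hzmax, hsplit, h5] at *
      linarith
    exact le_of_mul_le_mul_left h9 hε
  have h10 : (inner ℝ z v : ℝ) ≤ suppFn (L : Set (Euc n)) v :=
    inner_le_suppFn L.isCompact hzL v
  have h11 : suppFn (L : Set (Euc n)) v = inner ℝ z v := le_antisymm h7 h10
  rw [h11, real_inner_comm]
end

section
/- Let (A₁,…,A_ℓ) be a tuple of nonempty subsets of ℝⁿ and let E be a k-dimensional linear subspace containing span(∑_{i≤k}(A_i − A_i)). Then the tuple (A₁,…,A_ℓ) is semicritical if and only if both (A₁,…,A_k) is semicritical and (π_{E⊥}(A_{k+1}),…,π_{E⊥}(A_ℓ)) is semicritical. -/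
open Set MeasureTheory Metric
open scoped Pointwise

section Aux
open Module Set
open scoped Pointwise

private noncomputable def pil {n : ℕ} (E : Submodule ℝ (Euc n)) : Euc n →ₗ[ℝ] Euc n :=
  Eᗮ.subtype ∘ₗ (Eᗮ.orthogonalProjectionOnto).toLinearMap

private lemma pil_eq_zero {n : ℕ} (E : Submodule ℝ (Euc n)) {x : Euc n} (hx : x ∈ E) :
    pil E x = 0 := by
  have : Eᗮ.orthogonalProjectionOnto x = 0 :=
    Submodule.orthogonalProjectionOnto_apply_of_mem_orthogonal
      (Submodule.le_orthogonal_orthogonal E hx)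
  simp [pil, this]

private lemma sub_pil_mem {n : ℕ} (E : Submodule ℝ (Euc n)) (x : Euc n) : x - pil E x ∈ E := by
  have := Submodule.sub_starProjection_mem_orthogonal (K := Eᗮ) x
  rw [Submodule.orthogonal_orthogonal] at this
  exact this

private lemma span_set_add {n : ℕ} (X Y : Set (Euc n)) (hX : (0:Euc n) ∈ X)
    (hY : (0:Euc n) ∈ Y) :
    Submodule.span ℝ (X + Y) = Submodule.span ℝ X ⊔ Submodule.span ℝ Y := by
  apply le_antisymm
  · rw [Submodule.span_le]
    rintro _ ⟨x, hx, y, hy, rfl⟩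
    exact Submodule.add_mem _ (Submodule.mem_sup_left (Submodule.subset_span hx))
      (Submodule.mem_sup_right (Submodule.subset_span hy))
  · apply sup_le <;> rw [Submodule.span_le]
    · intro x hx
      exact Submodule.subset_span (by simpa using Set.add_mem_add hx hY)
    · intro y hy
      exact Submodule.subset_span (by simpa using Set.add_mem_add hX hy)

private lemma zero_mem_sum {n : ℕ} {ι : Type*} (S : ι → Set (Euc n))
    (hS : ∀ i, (0:Euc n) ∈ S i) (I : Finset ι) : (0:Euc n) ∈ ∑ i ∈ I, S i := by
  classical
  induction I using Finset.induction with
  | empty => simp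
  | @insert a s h ih => simpa [Finset.sum_insert h] using Set.add_mem_add (hS a) ih

private lemma span_sum_eq_sup {n : ℕ} {ι : Type*} (S : ι → Set (Euc n))
    (hS : ∀ i, (0:Euc n) ∈ S i) (I : Finset ι) (hI : I.Nonempty) :
    Submodule.span ℝ (∑ i ∈ I, S i) = I.sup (fun i => Submodule.span ℝ (S i)) := by
  induction hI using Finset.Nonempty.cons_induction with
  | singleton a => simp
  | cons a s ha hs ih =>
      rw [Finset.sum_cons, Finset.sup_cons, span_set_add _ _ (hS a) (zero_mem_sum S hS s), ih]

private lemma submap_fsup {n : ℕ} {ι : Type*} (f : Euc n →ₗ[ℝ] Euc n)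
    (W : ι → Submodule ℝ (Euc n)) (I : Finset ι) :
    (I.sup W).map f = I.sup (fun i => (W i).map f) := by
  classical
  induction I using Finset.induction with
  | empty => simp
  | @insert a s h ih => simp [Finset.sup_insert, Submodule.map_sup, ih]

private lemma rank_sup_ge {n : ℕ} (E : Submodule ℝ (Euc n)) (X U : Submodule ℝ (Euc n))
    (hX : X ≤ E) :
    finrank ℝ X + finrank ℝ (U.map (pil E)) ≤ finrank ℝ (X ⊔ U : Submodule ℝ (Euc n)) := by
  set Q := X ⊔ U with hQ
  set f : Q →ₗ[ℝ] Euc n := (pil E) ∘ₗ Q.subtype with hf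
  have hrank := LinearMap.finrank_range_add_finrank_ker f
  have h1 : finrank ℝ (U.map (pil E)) ≤ finrank ℝ (LinearMap.range f) := by
    apply Submodule.finrank_mono
    rintro _ ⟨u, hu, rfl⟩
    exact ⟨⟨u, le_sup_right (a := X) hu⟩, rfl⟩
  have h2 : finrank ℝ X ≤ finrank ℝ (LinearMap.ker f) := by
    rw [← LinearEquiv.finrank_eq (Submodule.comapSubtypeEquivOfLe (le_sup_left : X ≤ Q))]
    apply Submodule.finrank_mono
    intro x hx
    exact pil_eq_zero E (hX hx)
  omega

private lemma rank_sup_le {n : ℕ} (E U : Submodule ℝ (Euc n)) :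
    finrank ℝ (E ⊔ U : Submodule ℝ (Euc n)) ≤ finrank ℝ E + finrank ℝ (U.map (pil E)) := by
  have hle : E ⊔ U ≤ E ⊔ U.map (pil E) := by
    apply sup_le le_sup_left
    intro u hu
    have : u = (u - pil E u) + pil E u := by abel
    rw [this]
    exact Submodule.add_mem _ (Submodule.mem_sup_left (sub_pil_mem E u))
      (Submodule.mem_sup_right ⟨u, hu, rfl⟩)
  calc finrank ℝ (E ⊔ U : Submodule ℝ (Euc n))
      ≤ finrank ℝ (E ⊔ U.map (pil E) : Submodule ℝ (Euc n)) := Submodule.finrank_mono hle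
    _ ≤ finrank ℝ E + finrank ℝ (U.map (pil E)) := by
        have := Submodule.finrank_sup_add_finrank_inf_eq E (U.map (pil E))
        omega

private lemma card_le_sup {n ℓ : ℕ} {V : Fin ℓ → Submodule ℝ (Euc n)}
    (h : SemicriticalSub V) (I : Finset (Fin ℓ)) :
    I.card ≤ finrank ℝ (I.sup V : Submodule ℝ (Euc n)) := by
  rcases I.eq_empty_or_nonempty with rfl | hne
  · simp
  · exact h I hne

private lemma SC_append_iff {n k m : ℕ} (V : Fin k → Submodule ℝ (Euc n))
    (W : Fin m → Submodule ℝ (Euc n)) (E : Submodule ℝ (Euc n))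
    (hE : finrank ℝ E = k) (hVE : ∀ i, V i ≤ E) :
    SemicriticalSub (Fin.append V W) ↔
      (SemicriticalSub V ∧ SemicriticalSub (fun j => (W j).map (pil E))) := by
  classical
  set cE : Fin k ↪ Fin (k + m) := (Fin.castAddEmb m) with hcE
  set nE : Fin m ↪ Fin (k + m) := (Fin.natAddEmb k) with hnE
  have hsupc : ∀ (J : Finset (Fin k)), (J.map cE).sup (Fin.append V W) = J.sup V := by
    intro J
    rw [Finset.sup_map]
    exact Finset.sup_congr rfl (fun i _ => Fin.append_left V W i)
  have hsupn : ∀ (J : Finset (Fin m)), (J.map nE).sup (Fin.append V W) = J.sup W := by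
    intro J
    rw [Finset.sup_map]
    exact Finset.sup_congr rfl (fun j _ => Fin.append_right V W j)
  have hVle : ∀ (J : Finset (Fin k)), J.sup V ≤ E := fun J => Finset.sup_le (fun i _ => hVE i)
  have hdisj : ∀ (J₁ : Finset (Fin k)) (J₂ : Finset (Fin m)),
      Disjoint (J₁.map cE) (J₂.map nE) := by
    intro J₁ J₂
    rw [Finset.disjoint_left]
    rintro x hx1 hx2
    obtain ⟨i, _, rfl⟩ := Finset.mem_map.1 hx1
    obtain ⟨j, _, hj⟩ := Finset.mem_map.1 hx2
    have : (k : ℕ) + (j : ℕ) = (i : ℕ) := congrArg Fin.val hj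
    omega
  constructor
  · intro h
    constructor
    · intro J hJ
      have hne : (J.map cE).Nonempty := hJ.map
      have := h _ hne
      rwa [Finset.card_map, hsupc] at this
    · intro J hJ
      set I : Finset (Fin (k + m)) := (Finset.univ.map cE) ∪ (J.map nE) with hI
      have hne : I.Nonempty := Finset.Nonempty.inr hJ.map
      have hcard : I.card = k + J.card := by
        rw [hI, Finset.card_union_of_disjoint (hdisj _ _), Finset.card_map, Finset.card_map]
        simp
      have hsup : I.sup (Fin.append V W) = Finset.univ.sup V ⊔ J.sup W := by
        rw [hI, Finset.sup_union, hsupc, hsupn]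
      have h1 := h I hne
      rw [hcard, hsup] at h1
      have h2 : finrank ℝ (Finset.univ.sup V ⊔ J.sup W : Submodule ℝ (Euc n))
          ≤ finrank ℝ (E ⊔ J.sup W : Submodule ℝ (Euc n)) :=
        Submodule.finrank_mono (sup_le_sup_right (hVle _) _)
      have h3 := rank_sup_le E (J.sup W)
      rw [hE, submap_fsup] at h3
      omega
  · rintro ⟨h1, h2⟩ I hI
    set I₁ : Finset (Fin k) := Finset.univ.filter (fun i => Fin.castAdd m i ∈ I) with hI₁
    set I₂ : Finset (Fin m) := Finset.univ.filter (fun j => Fin.natAdd k j ∈ I) with hI₂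
    have hIeq : I = (I₁.map cE) ∪ (I₂.map nE) := by
      ext l
      induction l using Fin.addCases with
      | left i =>
          simp only [Finset.mem_union, Finset.mem_map, hI₁, hI₂, Finset.mem_filter,
            Finset.mem_univ, true_and]
          constructor
          · intro hl; exact Or.inl ⟨i, hl, rfl⟩
          · rintro (⟨i', hi', heq⟩ | ⟨j', hj', heq⟩)
            · have : i' = i := cE.injective heq
              rwa [← this]
            · have : (k : ℕ) + (j' : ℕ) = (i : ℕ) := congrArg Fin.val heq
              have := i.isLt
              omega
      | right j =>
          simp only [Finset.mem_union, Finset.mem_map, hI₁, hI₂, Finset.mem_filter,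
            Finset.mem_univ, true_and]
          constructor
          · intro hl; exact Or.inr ⟨j, hl, rfl⟩
          · rintro (⟨i', hi', heq⟩ | ⟨j', hj', heq⟩)
            · have : (i' : ℕ) = k + (j : ℕ) := congrArg Fin.val heq
              have := i'.isLt
              omega
            · have : j' = j := nE.injective heq
              rwa [← this]
    have hcard : I.card = I₁.card + I₂.card := by
      rw [hIeq, Finset.card_union_of_disjoint (hdisj _ _), Finset.card_map, Finset.card_map]
    have hsup : I.sup (Fin.append V W) = I₁.sup V ⊔ I₂.sup W := by
      rw [hIeq, Finset.sup_union, hsupc, hsupn]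
    rw [hcard, hsup]
    have ha := card_le_sup h1 I₁
    have hb := card_le_sup h2 I₂
    rw [← submap_fsup] at hb
    have hc := rank_sup_ge E (I₁.sup V) (I₂.sup W) (hVle I₁)
    omega

private lemma semicrit_iff_sub {n ℓ : ℕ} (C : Fin ℓ → Set (Euc n))
    (hC : ∀ i, (C i).Nonempty) :
    Semicritical C ↔ SemicriticalSub (fun i => Submodule.span ℝ (C i - C i)) := by
  have h0 : ∀ i, (0 : Euc n) ∈ C i - C i := by
    intro i
    obtain ⟨a, ha⟩ := hC i
    simpa using Set.sub_mem_sub ha ha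
  unfold Semicritical SemicriticalSub
  refine forall_congr' fun I => forall_congr' fun hI => ?_
  rw [span_sum_eq_sup _ h0 I hI]

end Aux

/-- Semicritical reduction: a tuple is semicritical iff the part lying in `E` is semicritical
and the projection of the remaining part onto `Eᗮ` is semicritical. -/
theorem semicritical_reduction {n k m : ℕ}
    (A : Fin k → Set (Euc n)) (B : Fin m → Set (Euc n))
    (hA : ∀ i, (A i).Nonempty) (hB : ∀ i, (B i).Nonempty)
    (E : Submodule ℝ (Euc n)) (hE : Module.finrank ℝ E = k)
    (hsub : Submodule.span ℝ (∑ i : Fin k, (A i - A i)) ≤ E) :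
    Semicritical (Fin.append A B) ↔
      (Semicritical A ∧ Semicritical (fun i => projW Eᗮ '' B i)) := by
  classical
  have h0A : ∀ i, (0 : Euc n) ∈ A i - A i := by
    intro i; obtain ⟨a, ha⟩ := hA i; simpa using Set.sub_mem_sub ha ha
  have hABne : ∀ l, (Fin.append A B l).Nonempty := by
    intro l
    induction l using Fin.addCases with
    | left i => simpa [Fin.append_left] using hA i
    | right j => simpa [Fin.append_right] using hB j
  have hpBne : ∀ j, (projW Eᗮ '' B j).Nonempty := fun j => (hB j).image _
  rw [semicrit_iff_sub _ hABne, semicrit_iff_sub A hA, semicrit_iff_sub _ hpBne]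
  have hfun : (fun l => Submodule.span ℝ (Fin.append A B l - Fin.append A B l))
      = Fin.append (fun i => Submodule.span ℝ (A i - A i))
          (fun j => Submodule.span ℝ (B j - B j)) := by
    funext l
    induction l using Fin.addCases with
    | left i => simp [Fin.append_left]
    | right j => simp [Fin.append_right]
  have hproj : (fun j => Submodule.span ℝ (projW Eᗮ '' B j - projW Eᗮ '' B j))
      = fun j => (Submodule.span ℝ (B j - B j)).map (pil E) := by
    funext j
    have h1 : projW Eᗮ '' B j = pil E '' B j := rfl
    rw [h1, ← Set.image_sub (pil E), Submodule.map_span]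
  have hVE : ∀ i, Submodule.span ℝ (A i - A i) ≤ E := by
    intro i
    have huniv : (Finset.univ : Finset (Fin k)).Nonempty := ⟨i, Finset.mem_univ i⟩
    calc Submodule.span ℝ (A i - A i)
        ≤ Finset.univ.sup (fun i => Submodule.span ℝ (A i - A i)) :=
          Finset.le_sup (f := fun i => Submodule.span ℝ (A i - A i)) (Finset.mem_univ i)
      _ = Submodule.span ℝ (∑ i : Fin k, (A i - A i)) :=
          (span_sum_eq_sup _ h0A Finset.univ huniv).symm
      _ ≤ E := hsub
  rw [hfun, hproj]
  exact SC_append_iff _ _ E hE hVE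
end
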